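/- arXiv:1403.7256 — 2 statements merged into one kernel-verified Lean document; each statement's English description precedes it below -/
import Mathlib

section
/- Subadditivity of f_j (equation (C.4)/(e:fsubadditive)): Let z ≥ 0 and 0 ≤ a ≤ 2^{−d}·z. Let X₁, …, X_n be pairwise disjoint scale-j polymers in ℤ^d whose union X = X₁ ∪ ⋯ ∪ X_n is nonempty. Then f_j(z, a, X) ≤ Σ_{i=1}^n f_j(z, a, X_i). -/
/-!
Subadditivity of `f_j` (equation (C.4)/(e:fsubadditive)) from
"A renormalisation group method. V."

Setting: scale-`j` polymers in `ℤ^d` (finite unions of `j`-blocks, the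
translates by `L^j·ℤ^d` of the cube `{x : 0 ≤ xᵢ < L^j}`), with `|X|_j` the
number of `j`-blocks contained in `X`, and
`f_j(z,a,X) = z + a·(|X|_j − 2^d)₊` for `X ≠ ∅`, `f_j(z,a,∅) = 0`.

Statement: for `z ≥ 0`, `0 ≤ a ≤ 2^{-d} z`, and pairwise disjoint scale-`j`
polymers `X₁,…,Xₙ` with nonempty union `X`, one has
`f_j(z,a,X) ≤ Σᵢ f_j(z,a,Xᵢ)`.
-/

namespace PaperZ

/-- `j`-blocks of `ℤ^d`: translates by the vectors of `L^j·ℤ^d` of the cube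
`{x ∈ ℤ^d : 0 ≤ xᵢ < L^j}`. -/
def IsBlockZ (d L k : ℕ) (B : Set (Fin d → ℤ)) : Prop :=
  ∃ m : Fin d → ℤ,
    B = {x : Fin d → ℤ | ∀ i, (L : ℤ) ^ k * m i ≤ x i ∧ x i < (L : ℤ) ^ k * m i + (L : ℤ) ^ k}

/-- Polymers at scale `k`: finite (possibly empty) unions of `k`-blocks. -/
def IsPolymerZ (d L k : ℕ) (X : Set (Fin d → ℤ)) : Prop :=
  ∃ 𝓑 : Set (Set (Fin d → ℤ)), 𝓑.Finite ∧ (∀ B ∈ 𝓑, IsBlockZ d L k B) ∧ X = ⋃₀ 𝓑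

/-- `|X|_k`: the number of `k`-blocks contained in `X`. -/
noncomputable def sizeZ (d L k : ℕ) (X : Set (Fin d → ℤ)) : ℕ :=
  {B | IsBlockZ d L k B ∧ B ⊆ X}.ncard

open Classical in
/-- `f_j(z,a,X) = z + a·(|X|_j − 2^d)₊` for nonempty `X`, and `f_j(z,a,∅) = 0`. -/
noncomputable def fwtZ (d L k : ℕ) (z a : ℝ) (X : Set (Fin d → ℤ)) : ℝ :=
  if X = ∅ then 0 else z + a * max ((sizeZ d L k X : ℝ) - 2 ^ d) 0

lemma Lpow_pos {L : ℕ} (hL : 2 ≤ L) (k : ℕ) : (0 : ℤ) < (L : ℤ) ^ k := by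
  have : (0 : ℤ) < (L : ℤ) := by exact_mod_cast Nat.lt_of_lt_of_le two_pos hL
  positivity

lemma block_nonempty {d L k : ℕ} (hL : 2 ≤ L) {B : Set (Fin d → ℤ)}
    (hB : IsBlockZ d L k B) : B.Nonempty := by
  obtain ⟨m, rfl⟩ := hB
  refine ⟨fun i => (L : ℤ) ^ k * m i, fun i => ⟨le_refl _, ?_⟩⟩
  have := Lpow_pos hL (L := L) k
  show (L : ℤ) ^ k * m i < (L : ℤ) ^ k * m i + (L : ℤ) ^ k
  linarith

lemma block_eq {d L k : ℕ} (hL : 2 ≤ L) {B B' : Set (Fin d → ℤ)} {x : Fin d → ℤ}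
    (hB : IsBlockZ d L k B) (hB' : IsBlockZ d L k B')
    (hx : x ∈ B) (hx' : x ∈ B') : B = B' := by
  obtain ⟨m, rfl⟩ := hB
  obtain ⟨m', rfl⟩ := hB'
  have hmm : m = m' := by
    funext i
    obtain ⟨h1, h2⟩ := hx i
    obtain ⟨h3, h4⟩ := hx' i
    have hpos := Lpow_pos hL (L := L) k
    have e1 : m i < m' i + 1 := by
      have : (L : ℤ) ^ k * m i < (L : ℤ) ^ k * (m' i + 1) := by nlinarith
      exact lt_of_mul_lt_mul_left this (le_of_lt hpos)
    have e2 : m' i < m i + 1 := by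
      have : (L : ℤ) ^ k * m' i < (L : ℤ) ^ k * (m i + 1) := by nlinarith
      exact lt_of_mul_lt_mul_left this (le_of_lt hpos)
    omega
  rw [hmm]

lemma block_subset {d L k : ℕ} (hL : 2 ≤ L) {B X : Set (Fin d → ℤ)} {x : Fin d → ℤ}
    (hB : IsBlockZ d L k B) (hX : IsPolymerZ d L k X)
    (hxB : x ∈ B) (hxX : x ∈ X) : B ⊆ X := by
  obtain ⟨𝓑, hfin, hblocks, rfl⟩ := hX
  obtain ⟨B', hB'mem, hxB'⟩ := Set.mem_sUnion.mp hxX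
  rw [block_eq hL hB (hblocks B' hB'mem) hxB hxB']
  exact Set.subset_sUnion_of_mem hB'mem

lemma blockSet_finite {d L k : ℕ} (hL : 2 ≤ L) {X : Set (Fin d → ℤ)}
    (hX : IsPolymerZ d L k X) : {B | IsBlockZ d L k B ∧ B ⊆ X}.Finite := by
  obtain ⟨𝓑, hfin, hblocks, rfl⟩ := hX
  refine hfin.subset ?_
  rintro B ⟨hB, hBsub⟩
  obtain ⟨x, hx⟩ := block_nonempty hL hB
  obtain ⟨B', hB'mem, hxB'⟩ := Set.mem_sUnion.mp (hBsub hx)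
  rw [block_eq hL hB (hblocks B' hB'mem) hx hxB']
  exact hB'mem

/-- **Subadditivity of `f_j`** (equation (C.4)): for `z ≥ 0` and
`0 ≤ a ≤ 2^{−d}·z`, and pairwise disjoint scale-`j` polymers `X₁, …, Xₙ`
whose union is nonempty, `f_j(z, a, ⋃ᵢ Xᵢ) ≤ Σᵢ f_j(z, a, Xᵢ)`. -/
theorem f_subadditive (d L j : ℕ) (hd : 1 ≤ d) (hL : 2 ≤ L)
    (z a : ℝ) (hz : 0 ≤ z) (ha0 : 0 ≤ a) (ha : a ≤ z / 2 ^ d)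
    (n : ℕ) (X : Fin n → Set (Fin d → ℤ))
    (hpoly : ∀ i, IsPolymerZ d L j (X i))
    (hdisj : ∀ i₁ i₂, i₁ ≠ i₂ → Disjoint (X i₁) (X i₂))
    (hne : (⋃ i, X i).Nonempty) :
    fwtZ d L j z a (⋃ i, X i) ≤ ∑ i, fwtZ d L j z a (X i) := by
  classical
  set T : Finset (Fin n) := Finset.univ.filter (fun i => (X i).Nonempty) with hT
  have hTmem : ∀ i, i ∈ T ↔ (X i).Nonempty := by
    intro i; simp [hT]
  -- T is nonempty
  have hTne : T.Nonempty := by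
    obtain ⟨x, hx⟩ := hne
    obtain ⟨i, hxi⟩ := Set.mem_iUnion.mp hx
    exact ⟨i, (hTmem i).mpr ⟨x, hxi⟩⟩
  have hN1 : 1 ≤ (T.card : ℝ) := by exact_mod_cast Finset.card_pos.mpr hTne
  -- finite block sets
  have hfin : ∀ i, {B | IsBlockZ d L j B ∧ B ⊆ X i}.Finite :=
    fun i => blockSet_finite hL (hpoly i)
  set s : Fin n → Finset (Set (Fin d → ℤ)) := fun i => (hfin i).toFinset with hs
  -- size of union bounded by sum of sizes over T
  have hsub : {B | IsBlockZ d L j B ∧ B ⊆ ⋃ i, X i} ⊆ ↑(T.biUnion s) := by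
    rintro B ⟨hB, hBsub⟩
    obtain ⟨x, hx⟩ := block_nonempty hL hB
    obtain ⟨i, hxi⟩ := Set.mem_iUnion.mp (hBsub hx)
    simp only [Finset.coe_biUnion, Set.mem_iUnion]
    refine ⟨i, (hTmem i).mpr ⟨x, hxi⟩, ?_⟩
    simp only [hs, Set.Finite.coe_toFinset]
    exact ⟨hB, block_subset hL hB (hpoly i) hx hxi⟩
  have hScount : sizeZ d L j (⋃ i, X i) ≤ ∑ i ∈ T, sizeZ d L j (X i) := by
    calc sizeZ d L j (⋃ i, X i) ≤ (↑(T.biUnion s) : Set _).ncard :=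
          Set.ncard_le_ncard hsub (T.biUnion s).finite_toSet
      _ = (T.biUnion s).card := Set.ncard_coe_finset _
      _ ≤ ∑ i ∈ T, (s i).card := Finset.card_biUnion_le
      _ = ∑ i ∈ T, sizeZ d L j (X i) := by
          refine Finset.sum_congr rfl fun i _ => ?_
          exact (Set.ncard_eq_toFinset_card _ (hfin i)).symm
  -- rewrite LHS and RHS
  have hUne : (⋃ i, X i) ≠ ∅ := hne.ne_empty
  have hLHS : fwtZ d L j z a (⋃ i, X i)
      = z + a * max ((sizeZ d L j (⋃ i, X i) : ℝ) - 2 ^ d) 0 := by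
    simp [fwtZ, hUne]
  have hRHS : ∑ i, fwtZ d L j z a (X i)
      = ∑ i ∈ T, (z + a * max ((sizeZ d L j (X i) : ℝ) - 2 ^ d) 0) := by
    rw [← Finset.sum_subset (Finset.subset_univ T) ?_]
    · refine Finset.sum_congr rfl fun i hi => ?_
      have : X i ≠ ∅ := ((hTmem i).mp hi).ne_empty
      simp [fwtZ, this]
    · intro i _ hi
      have : X i = ∅ := by
        by_contra h
        exact hi ((hTmem i).mpr (Set.nonempty_iff_ne_empty.mpr h))
      simp [fwtZ, this]
  rw [hLHS, hRHS]
  -- arithmetic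
  set S : ℝ := (sizeZ d L j (⋃ i, X i) : ℝ) with hS
  set M : ℝ := ∑ i ∈ T, max ((sizeZ d L j (X i) : ℝ) - 2 ^ d) 0 with hM
  have hMnn : 0 ≤ M := Finset.sum_nonneg fun i _ => le_max_right _ _
  have hSle : S ≤ ∑ i ∈ T, (sizeZ d L j (X i) : ℝ) := by
    rw [hS]
    push_cast
    exact_mod_cast hScount
  have hsum_le : ∑ i ∈ T, (sizeZ d L j (X i) : ℝ)
      ≤ M + (T.card : ℝ) * 2 ^ d := by
    have hb : ∀ i ∈ T, (sizeZ d L j (X i) : ℝ)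
        ≤ max ((sizeZ d L j (X i) : ℝ) - 2 ^ d) 0 + 2 ^ d := fun i _ => by
      have := le_max_left ((sizeZ d L j (X i) : ℝ) - 2 ^ d) 0
      linarith
    calc ∑ i ∈ T, (sizeZ d L j (X i) : ℝ)
        ≤ ∑ i ∈ T, (max ((sizeZ d L j (X i) : ℝ) - 2 ^ d) 0 + 2 ^ d) :=
          Finset.sum_le_sum hb
      _ = M + (T.card : ℝ) * 2 ^ d := by
          rw [Finset.sum_add_distrib, Finset.sum_const, nsmul_eq_mul, hM]
  have hkey : max (S - 2 ^ d) 0 ≤ M + ((T.card : ℝ) - 1) * 2 ^ d := by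
    rcases le_total (S - 2 ^ d) 0 with h | h
    · rw [max_eq_right h]
      have : (0:ℝ) ≤ ((T.card : ℝ) - 1) * 2 ^ d := by
        apply mul_nonneg <;> [linarith; positivity]
      linarith
    · rw [max_eq_left h]
      linarith
  have ha' : a * 2 ^ d ≤ z := (le_div_iff₀ (by positivity : (0:ℝ) < 2 ^ d)).mp ha
  rw [Finset.sum_add_distrib, Finset.sum_const, ← Finset.mul_sum, ← hM]
  have h1 : a * max (S - 2 ^ d) 0 ≤ a * M + a * 2 ^ d * ((T.card : ℝ) - 1) := by
    have := mul_le_mul_of_nonneg_left hkey ha0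
    nlinarith
  have h2 : a * 2 ^ d * ((T.card : ℝ) - 1) ≤ z * ((T.card : ℝ) - 1) := by
    apply mul_le_mul_of_nonneg_right ha' (by linarith)
  have hcard : (T.card • z : ℝ) = (T.card : ℝ) * z := by
    simp [nsmul_eq_mul]
  rw [hcard]
  nlinarith

end PaperZ
end

section
/- Proposition 2.1 (joint continuity of Fréchet derivatives): Let X and Y be complex Banach spaces, let U be an open subset of X, and let E be a compact topological space. Let f : E × X → Y, written f_s(x) = f(s,x), be such that: (i) f is uniformly bounded, i.e. sup_{(s,x) ∈ E×X} ‖f_s(x)‖ < ∞; (ii) for every s ∈ E, the map x ↦ f_s(x) is analytic on U, i.e. complex-Fréchet differentiable at every point of U (equivalently, continuously complex-Fréchet differentiable on U); and (iii) for every x ∈ X, the map s ↦ f_s(x) is continuous on E. Then for every integer p ≥ 0, the map (s, x, (ẋ₁, …, ẋ_p)) ↦ D^p f_s(x)(ẋ₁, …, ẋ_p), from E × U × X^p to Y, is jointly continuous, where D^p f_s(x) denotes the p-th Fréchet derivative of f_s at x ∈ U (for p = 0 this is the map (s,x) ↦ f_s(x)). -/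
/-!
Proposition 2.1 of "A renormalisation group method. V."
(joint continuity of Fréchet derivatives).

Let `X`, `Y` be complex Banach spaces, `U ⊆ X` open, `E` a compact
topological space, and `f : E × X → Y` a uniformly bounded map such that
`x ↦ f_s(x)` is analytic on `U` (i.e. complex-Fréchet differentiable at every
point of `U`) for every `s`, and `s ↦ f_s(x)` is continuous for every `x`.
Then for every `p ≥ 0`, the map
`(s, x, (ẋ₁,…,ẋ_p)) ↦ D^p f_s(x)(ẋ₁,…,ẋ_p)` is jointly continuous on
`E × U × X^p`, where `D^p f_s(x)` is the `p`-th Fréchet derivative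
(formalised by `iteratedFDeriv ℂ p`).
-/


open Metric Set Filter Complex Topology
open scoped Real NNReal ENNReal

section OneDim

variable {Z : Type*} [NormedAddCommGroup Z] [NormedSpace ℂ Z] [CompleteSpace Z]

/-- Directional derivative along a complex line. -/
lemma hasDerivAt_line {X : Type*} [NormedAddCommGroup X] [NormedSpace ℂ X]
    {g : X → Z} {x u : X} {t₀ : ℂ} (hg : DifferentiableAt ℂ g (x + t₀ • u)) :
    HasDerivAt (fun t : ℂ => g (x + t • u)) (fderiv ℂ g (x + t₀ • u) u) t₀ := by
  have h1 : HasDerivAt (fun t : ℂ => x + t • u) u t₀ := by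
    simpa using ((hasDerivAt_id t₀).smul_const u).const_add x
  exact hg.hasFDerivAt.comp_hasDerivAt t₀ h1

lemma norm_cauchyPowerSeries_le_of_bound {ψ : ℂ → Z} {ρ M : ℝ} (hρ : 0 < ρ) (hM : 0 ≤ M)
    (hb : ∀ z ∈ sphere (0:ℂ) ρ, ‖ψ z‖ ≤ M) (n : ℕ) :
    ‖cauchyPowerSeries ψ 0 ρ n‖ ≤ M / ρ ^ n := by
  rw [cauchyPowerSeries, ContinuousMultilinearMap.norm_mkPiRing]
  have hsp : ∀ z ∈ sphere (0:ℂ) ρ, ‖(z - 0)⁻¹ ^ n • (z - 0)⁻¹ • ψ z‖ ≤ ρ⁻¹ ^ n * ρ⁻¹ * M := by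
    intro z hz
    have hz' : ‖z‖ = ρ := by simpa using hz
    rw [norm_smul, norm_smul, norm_inv, norm_pow, norm_inv, sub_zero, hz']
    have := hb z hz
    have h1 : (0:ℝ) ≤ ρ⁻¹ ^ n * ρ⁻¹ := by positivity
    calc ρ⁻¹ ^ n * (ρ⁻¹ * ‖ψ z‖) = ρ⁻¹ ^ n * ρ⁻¹ * ‖ψ z‖ := by ring
    _ ≤ ρ⁻¹ ^ n * ρ⁻¹ * M := by exact mul_le_mul_of_nonneg_left this h1
  have h2 := circleIntegral.norm_integral_le_of_norm_le_const hρ.le hsp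
  rw [norm_smul]
  have h3 : ‖(2 * (π:ℂ) * I)⁻¹‖ = (2 * π)⁻¹ := by
    simp [Real.pi_pos.le]
  rw [h3]
  calc (2 * π)⁻¹ * ‖∮ z in C(0, ρ), (z - 0)⁻¹ ^ n • (z - 0)⁻¹ • ψ z‖
      ≤ (2 * π)⁻¹ * (2 * π * ρ * (ρ⁻¹ ^ n * ρ⁻¹ * M)) := by
        exact mul_le_mul_of_nonneg_left h2 (by positivity)
    _ = M / ρ ^ n := by
        field_simp
        rw [one_div, inv_pow, mul_comm, ← mul_assoc, mul_inv_cancel₀ (pow_ne_zero n hρ.ne'), one_mul]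

lemma norm_deriv_le_of_closedBall {ψ : ℂ → Z} {ρ M : ℝ} (hρ : 0 < ρ)
    (hd : ∀ t ∈ closedBall (0:ℂ) ρ, DifferentiableAt ℂ ψ t)
    (hb : ∀ t ∈ closedBall (0:ℂ) ρ, ‖ψ t‖ ≤ M) :
    ‖deriv ψ 0‖ ≤ M / ρ := by
  have hM : 0 ≤ M := (norm_nonneg _).trans (hb 0 (by simp [hρ.le]))
  have hcoe : ((ρ.toNNReal : ℝ≥0) : ℝ) = ρ := Real.coe_toNNReal ρ hρ.le
  have hdo : DifferentiableOn ℂ ψ (closedBall (0:ℂ) (ρ.toNNReal : ℝ)) := by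
    rw [hcoe]; exact fun t ht => (hd t ht).differentiableWithinAt
  have hps := hdo.hasFPowerSeriesOnBall (by simpa using hρ)
  rw [hcoe] at hps
  have hder : deriv ψ 0 = cauchyPowerSeries ψ 0 ρ 1 (fun _ => 1) :=
    hps.hasFPowerSeriesAt.deriv
  rw [hder]
  have h1 : ‖cauchyPowerSeries ψ 0 ρ 1 (fun _ => (1:ℂ))‖
      ≤ ‖cauchyPowerSeries ψ 0 ρ 1‖ * ∏ _i : Fin 1, ‖(1:ℂ)‖ :=
    (cauchyPowerSeries ψ 0 ρ 1).le_opNorm _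
  simp only [norm_one, Finset.prod_const_one, mul_one] at h1
  refine h1.trans ?_
  have := norm_cauchyPowerSeries_le_of_bound hρ hM
    (fun z hz => hb z (sphere_subset_closedBall hz)) 1
  simpa using this

/-- Quantitative second-order Taylor bound from the Cauchy power series. -/
lemma taylor_two_bound {ψ : ℂ → Z} {ρ M : ℝ} (hρ : 0 < ρ)
    (hd : ∀ t ∈ closedBall (0:ℂ) ρ, DifferentiableAt ℂ ψ t)
    (hb : ∀ t ∈ closedBall (0:ℂ) ρ, ‖ψ t‖ ≤ M)
    {w : ℂ} (hw : ‖w‖ ≤ ρ / 2) :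
    ‖ψ w - ψ 0 - w • deriv ψ 0‖ ≤ 2 * M / ρ ^ 2 * ‖w‖ ^ 2 := by
  have hM : 0 ≤ M := (norm_nonneg _).trans (hb 0 (by simp [hρ.le]))
  have hcoe : ((ρ.toNNReal : ℝ≥0) : ℝ) = ρ := Real.coe_toNNReal ρ hρ.le
  have hdo : DifferentiableOn ℂ ψ (closedBall (0:ℂ) (ρ.toNNReal : ℝ)) := by
    rw [hcoe]; exact fun t ht => (hd t ht).differentiableWithinAt
  have hps := hdo.hasFPowerSeriesOnBall (by simpa using hρ)
  rw [hcoe] at hps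
  set P := cauchyPowerSeries ψ 0 ρ with hP
  have hwρ : ‖w‖ < ρ := lt_of_le_of_lt hw (by linarith)
  have hwball : w ∈ Metric.eball (0:ℂ) (ρ.toNNReal : ℝ≥0∞) := by
    rw [Metric.emetric_ball_nnreal]
    simpa [hcoe] using hwρ
  have hsum : HasSum (fun n => P n fun _ => w) (ψ w) := by
    simpa using hps.hasSum hwball
  set c : ℕ → Z := fun n => P n fun _ => w with hc
  have hPn : ∀ n, ‖P n‖ ≤ M / ρ ^ n := fun n =>
    norm_cauchyPowerSeries_le_of_bound hρ hM
      (fun z hz => hb z (sphere_subset_closedBall hz)) n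
  have hcn : ∀ n, ‖c n‖ ≤ M * (‖w‖ / ρ) ^ n := by
    intro n
    have h1 : ‖c n‖ ≤ ‖P n‖ * ∏ _i : Fin n, ‖w‖ := (P n).le_opNorm _
    simp only [Finset.prod_const, Finset.card_univ, Fintype.card_fin] at h1
    refine h1.trans ?_
    rw [div_pow]
    calc ‖P n‖ * ‖w‖ ^ n ≤ M / ρ ^ n * ‖w‖ ^ n := by
          exact mul_le_mul_of_nonneg_right (hPn n) (by positivity)
      _ = M * (‖w‖ ^ n / ρ ^ n) := by ring
  have hc0 : c 0 = ψ 0 := by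
    have := hps.coeff_zero (fun _ => w)
    simpa [hc] using this
  have hc1 : c 1 = w • deriv ψ 0 := by
    have hder : deriv ψ 0 = P 1 (fun _ => 1) := hps.hasFPowerSeriesAt.deriv
    rw [hder, hc]
    have := (P 1).map_smul_univ (fun _ => w) (fun _ => (1:ℂ))
    simpa using this.symm
  have h2 : HasSum (fun n => c (n + 2)) (ψ w - (c 0 + c 1)) := by
    have := (hasSum_nat_add_iff' (f := c) 2).mpr hsum
    simpa [Finset.sum_range_succ] using this
  have hgeo : HasSum (fun n : ℕ => (M * (‖w‖ / ρ) ^ 2) * (2⁻¹ : ℝ) ^ n)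
      ((M * (‖w‖ / ρ) ^ 2) * 2) := by
    have h := (hasSum_geometric_of_lt_one (by norm_num : (0:ℝ) ≤ 2⁻¹)
      (by norm_num : (2⁻¹:ℝ) < 1)).mul_left (M * (‖w‖ / ρ) ^ 2)
    norm_num at h
    simpa [one_div] using h
  have hbound : ∀ n : ℕ, ‖c (n + 2)‖ ≤ (M * (‖w‖ / ρ) ^ 2) * (2⁻¹ : ℝ) ^ n := by
    intro n
    refine (hcn (n + 2)).trans ?_
    have hq : 0 ≤ ‖w‖ / ρ := by positivity
    have hq2 : ‖w‖ / ρ ≤ 2⁻¹ := by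
      rw [div_le_iff₀ hρ]
      linarith
    calc M * (‖w‖ / ρ) ^ (n + 2) = M * (‖w‖ / ρ) ^ 2 * (‖w‖ / ρ) ^ n := by ring
      _ ≤ M * (‖w‖ / ρ) ^ 2 * (2⁻¹) ^ n := by
          exact mul_le_mul_of_nonneg_left (pow_le_pow_left₀ hq hq2 n) (by positivity)
  have hnorm : ‖ψ w - (c 0 + c 1)‖ ≤ (M * (‖w‖ / ρ) ^ 2) * 2 := by
    rw [← h2.tsum_eq]
    exact tsum_of_norm_bounded hgeo hbound
  rw [hc0, hc1] at hnorm
  calc ‖ψ w - ψ 0 - w • deriv ψ 0‖ = ‖ψ w - (ψ 0 + w • deriv ψ 0)‖ := by rw [sub_sub]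
    _ ≤ M * (‖w‖ / ρ) ^ 2 * 2 := hnorm
    _ = 2 * M / ρ ^ 2 * ‖w‖ ^ 2 := by rw [div_pow]; ring

end OneDim

section MultiDim

variable {X Y : Type*} [NormedAddCommGroup X] [NormedSpace ℂ X]
  [NormedAddCommGroup Y] [NormedSpace ℂ Y] [CompleteSpace Y]

/-- Second-order Taylor estimate for maps between Banach spaces. -/
lemma quad_approx {g : X → Y} {x₀ : X} {R M : ℝ}
    (hd : ∀ y ∈ ball x₀ R, DifferentiableAt ℂ g y)
    (hb : ∀ y ∈ ball x₀ R, ‖g y‖ ≤ M)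
    {x h : X} (hx : x ∈ ball x₀ (R / 2)) (hh : ‖h‖ ≤ R / 4) :
    ‖g (x + h) - g x - fderiv ℂ g x h‖ ≤ 8 * M / R ^ 2 * ‖h‖ ^ 2 := by
  have hR : 0 < R := by
    have := mem_ball.mp hx
    have := dist_nonneg (x := x) (y := x₀)
    linarith
  have hM : 0 ≤ M := (norm_nonneg _).trans (hb x (by
    refine mem_ball.mpr (lt_of_lt_of_le (mem_ball.mp hx) (by linarith))))
  rcases eq_or_ne h 0 with rfl | hh0
  · simp only [add_zero, map_zero, sub_zero, sub_self, norm_zero, norm_zero]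
    positivity
  have hh' : 0 < ‖h‖ := norm_pos_iff.mpr hh0
  set ρ := R / (2 * ‖h‖) with hρdef
  have hρ : 0 < ρ := by positivity
  have hmem : ∀ t : ℂ, t ∈ closedBall (0:ℂ) ρ → x + t • h ∈ ball x₀ R := by
    intro t ht
    rw [mem_closedBall, dist_zero_right] at ht
    rw [mem_ball, dist_eq_norm]
    have : x + t • h - x₀ = (x - x₀) + t • h := by abel
    rw [this]
    calc ‖(x - x₀) + t • h‖ ≤ ‖x - x₀‖ + ‖t • h‖ := norm_add_le _ _
      _ < R / 2 + R / 2 := by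
          have h1 : ‖x - x₀‖ < R / 2 := by
            have := mem_ball.mp hx; rwa [dist_eq_norm] at this
          have h2 : ‖t • h‖ ≤ R / 2 := by
            rw [norm_smul]
            calc ‖t‖ * ‖h‖ ≤ ρ * ‖h‖ := mul_le_mul_of_nonneg_right ht hh'.le
              _ = R / 2 := by rw [hρdef]; field_simp
          linarith
      _ = R := by ring
  set ψ := fun t : ℂ => g (x + t • h) with hψdef
  have hdψ : ∀ t ∈ closedBall (0:ℂ) ρ, DifferentiableAt ℂ ψ t := fun t ht =>
    (hasDerivAt_line (hd _ (hmem t ht))).differentiableAt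
  have hbψ : ∀ t ∈ closedBall (0:ℂ) ρ, ‖ψ t‖ ≤ M := fun t ht => hb _ (hmem t ht)
  have hw : ‖(1:ℂ)‖ ≤ ρ / 2 := by
    rw [norm_one, le_div_iff₀ (by norm_num : (0:ℝ) < 2)]
    rw [hρdef, le_div_iff₀ (by positivity)]
    linarith
  have htb := taylor_two_bound hρ hdψ hbψ hw
  have hψ1 : ψ 1 = g (x + h) := by rw [hψdef]; simp
  have hψ0 : ψ 0 = g x := by rw [hψdef]; simp
  have hder : deriv ψ 0 = fderiv ℂ g x h := by
    have h0 : DifferentiableAt ℂ g (x + (0:ℂ) • h) := by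
      simpa using hd x (mem_ball.mpr (lt_of_lt_of_le (mem_ball.mp hx) (by linarith)))
    have := (hasDerivAt_line h0).deriv
    simpa using this
  rw [hψ1, hψ0, hder] at htb
  simp only [norm_one, one_pow, mul_one, one_smul] at htb
  refine htb.trans (le_of_eq ?_)
  rw [hρdef]
  field_simp
  ring

/-- Cauchy bound for the operator norm of the derivative. -/
lemma norm_fderiv_le_of_ball {g : X → Y} {x₀ : X} {R M : ℝ}
    (hd : ∀ y ∈ ball x₀ R, DifferentiableAt ℂ g y)
    (hb : ∀ y ∈ ball x₀ R, ‖g y‖ ≤ M)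
    {x : X} (hx : x ∈ ball x₀ (R / 2)) :
    ‖fderiv ℂ g x‖ ≤ 4 * M / R := by
  have hR : 0 < R := by
    have := mem_ball.mp hx
    have := dist_nonneg (x := x) (y := x₀)
    linarith
  have hxR : x ∈ ball x₀ R := mem_ball.mpr (lt_of_lt_of_le (mem_ball.mp hx) (by linarith))
  have hM : 0 ≤ M := (norm_nonneg _).trans (hb x hxR)
  refine ContinuousLinearMap.opNorm_le_bound _ (by positivity) fun u => ?_
  rcases eq_or_ne u 0 with rfl | hu
  · simp
  have hu' : 0 < ‖u‖ := norm_pos_iff.mpr hu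
  set ρ := R / (4 * ‖u‖) with hρdef
  have hρ : 0 < ρ := by positivity
  have hmem : ∀ t : ℂ, t ∈ closedBall (0:ℂ) ρ → x + t • u ∈ ball x₀ R := by
    intro t ht
    rw [mem_closedBall, dist_zero_right] at ht
    rw [mem_ball, dist_eq_norm]
    have heq : x + t • u - x₀ = (x - x₀) + t • u := by abel
    rw [heq]
    have h1 : ‖x - x₀‖ < R / 2 := by
      have := mem_ball.mp hx; rwa [dist_eq_norm] at this
    have h2 : ‖t • u‖ ≤ R / 4 := by
      rw [norm_smul]
      calc ‖t‖ * ‖u‖ ≤ ρ * ‖u‖ := mul_le_mul_of_nonneg_right ht hu'.le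
        _ = R / 4 := by rw [hρdef]; field_simp
    calc ‖(x - x₀) + t • u‖ ≤ ‖x - x₀‖ + ‖t • u‖ := norm_add_le _ _
      _ < R := by linarith
  set ψ := fun t : ℂ => g (x + t • u) with hψdef
  have hdψ : ∀ t ∈ closedBall (0:ℂ) ρ, DifferentiableAt ℂ ψ t := fun t ht =>
    (hasDerivAt_line (hd _ (hmem t ht))).differentiableAt
  have hbψ : ∀ t ∈ closedBall (0:ℂ) ρ, ‖ψ t‖ ≤ M := fun t ht => hb _ (hmem t ht)
  have hder : deriv ψ 0 = fderiv ℂ g x u := by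
    have h0 : DifferentiableAt ℂ g (x + (0:ℂ) • u) := by simpa using hd x hxR
    have := (hasDerivAt_line h0).deriv
    simpa using this
  have := norm_deriv_le_of_closedBall hρ hdψ hbψ
  rw [hder] at this
  refine this.trans (le_of_eq ?_)
  rw [hρdef]
  field_simp

/-- Uniform Lipschitz bound on `g` itself. -/
lemma norm_sub_le_of_ball {g : X → Y} {x₀ : X} {R M : ℝ}
    (hd : ∀ y ∈ ball x₀ R, DifferentiableAt ℂ g y)
    (hb : ∀ y ∈ ball x₀ R, ‖g y‖ ≤ M)
    {x y : X} (hx : x ∈ ball x₀ (R / 8)) (hy : y ∈ ball x₀ (R / 8)) :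
    ‖g x - g y‖ ≤ 6 * M / R * ‖x - y‖ := by
  have hR : 0 < R := by
    have := mem_ball.mp hx
    have := dist_nonneg (x := x) (y := x₀)
    linarith
  have hyR2 : y ∈ ball x₀ (R / 2) := mem_ball.mpr (lt_of_lt_of_le (mem_ball.mp hy) (by linarith))
  have hM : 0 ≤ M := (norm_nonneg _).trans (hb y
    (mem_ball.mpr (lt_of_lt_of_le (mem_ball.mp hy) (by linarith))))
  set h := x - y with hhdef
  have hh : ‖h‖ ≤ R / 4 := by
    have h1 : ‖x - x₀‖ < R / 8 := by have := mem_ball.mp hx; rwa [dist_eq_norm] at this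
    have h2 : ‖x₀ - y‖ < R / 8 := by
      have := mem_ball.mp hy; rw [dist_eq_norm] at this
      rw [norm_sub_rev]; exact this
    calc ‖h‖ = ‖(x - x₀) + (x₀ - y)‖ := by rw [hhdef]; abel_nf
      _ ≤ ‖x - x₀‖ + ‖x₀ - y‖ := norm_add_le _ _
      _ ≤ R / 4 := by linarith
  have hq := quad_approx hd hb hyR2 hh
  have hyh : y + h = x := by rw [hhdef]; abel
  rw [hyh] at hq
  have hDb : ‖fderiv ℂ g y h‖ ≤ 4 * M / R * ‖h‖ := by
    calc ‖fderiv ℂ g y h‖ ≤ ‖fderiv ℂ g y‖ * ‖h‖ := (fderiv ℂ g y).le_opNorm h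
      _ ≤ 4 * M / R * ‖h‖ :=
        mul_le_mul_of_nonneg_right (norm_fderiv_le_of_ball hd hb hyR2) (norm_nonneg _)
  calc ‖g x - g y‖ = ‖(g x - g y - fderiv ℂ g y h) + fderiv ℂ g y h‖ := by abel_nf
    _ ≤ ‖g x - g y - fderiv ℂ g y h‖ + ‖fderiv ℂ g y h‖ := norm_add_le _ _
    _ ≤ 8 * M / R ^ 2 * ‖h‖ ^ 2 + 4 * M / R * ‖h‖ := add_le_add hq hDb
    _ ≤ 6 * M / R * ‖x - y‖ := by
        have : 8 * M / R ^ 2 * ‖h‖ ^ 2 ≤ 2 * M / R * ‖h‖ := by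
          have h8 : 8 * M / R ^ 2 * ‖h‖ ^ 2 = (8 * M / R ^ 2 * ‖h‖) * ‖h‖ := by ring
          have h9 : 2 * M / R * ‖h‖ = (2 * M / R) * ‖h‖ := by ring
          rw [h8, h9]
          refine mul_le_mul_of_nonneg_right ?_ (norm_nonneg _)
          calc 8 * M / R ^ 2 * ‖h‖ ≤ 8 * M / R ^ 2 * (R / 4) :=
                mul_le_mul_of_nonneg_left hh (by positivity)
            _ = 2 * M / R := by field_simp; ring
        have hhx : ‖h‖ = ‖x - y‖ := by rw [hhdef]
        have heq : 2 * M / R * ‖h‖ + 4 * M / R * ‖h‖ = 6 * M / R * ‖h‖ := by ring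
        rw [← hhx]
        linarith
  
/-- Pointwise Lipschitz estimate for the derivative. -/
lemma fderiv_lip {g : X → Y} {x₀ : X} {R M : ℝ}
    (hd : ∀ y ∈ ball x₀ R, DifferentiableAt ℂ g y)
    (hb : ∀ y ∈ ball x₀ R, ‖g y‖ ≤ M)
    {x y : X} (hx : x ∈ ball x₀ (R / 16)) (hy : y ∈ ball x₀ (R / 16)) (u : X) :
    ‖fderiv ℂ g x u - fderiv ℂ g y u‖ ≤ 48 * M / R ^ 2 * ‖x - y‖ * ‖u‖ := by
  have hR : 0 < R := by
    have := mem_ball.mp hx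
    have := dist_nonneg (x := x) (y := x₀)
    linarith
  have hxR2 : x ∈ ball x₀ (R / 2) := mem_ball.mpr (lt_of_lt_of_le (mem_ball.mp hx) (by linarith))
  have hyR2 : y ∈ ball x₀ (R / 2) := mem_ball.mpr (lt_of_lt_of_le (mem_ball.mp hy) (by linarith))
  have hM : 0 ≤ M := (norm_nonneg _).trans (hb x
    (mem_ball.mpr (lt_of_lt_of_le (mem_ball.mp hx) (by linarith))))
  rcases eq_or_ne x y with rfl | hxy
  · simp only [sub_self, norm_zero]
    positivity
  rcases eq_or_ne u 0 with rfl | hu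
  · simp only [map_zero, sub_self, norm_zero, norm_zero]
    positivity
  have hu' : 0 < ‖u‖ := norm_pos_iff.mpr hu
  set w := x - y with hwdef
  have hw0 : w ≠ 0 := sub_ne_zero.mpr hxy
  have hτ : 0 < ‖w‖ := norm_pos_iff.mpr hw0
  have hwle : ‖w‖ ≤ R / 8 := by
    have h1 : ‖x - x₀‖ < R / 16 := by have := mem_ball.mp hx; rwa [dist_eq_norm] at this
    have h2 : ‖x₀ - y‖ < R / 16 := by
      have := mem_ball.mp hy; rw [dist_eq_norm] at this
      rw [norm_sub_rev]; exact this
    calc ‖w‖ = ‖(x - x₀) + (x₀ - y)‖ := by rw [hwdef]; abel_nf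
      _ ≤ ‖x - x₀‖ + ‖x₀ - y‖ := norm_add_le _ _
      _ ≤ R / 8 := by linarith
  set c : ℂ := ((‖w‖ / ‖u‖ : ℝ) : ℂ) with hcdef
  set k := c • u with hkdef
  have hknorm : ‖k‖ = ‖w‖ := by
    rw [hkdef, norm_smul, hcdef]
    rw [Complex.norm_real, Real.norm_eq_abs, abs_of_pos (by positivity)]
    field_simp
  -- identity : D x k - D y k = B1 - B2 - A
  have hyw : y + w = x := by rw [hwdef]; abel
  have hQ1 := quad_approx hd hb hyR2 (show ‖w + k‖ ≤ R / 4 by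
    calc ‖w + k‖ ≤ ‖w‖ + ‖k‖ := norm_add_le _ _
      _ = ‖w‖ + ‖w‖ := by rw [hknorm]
      _ ≤ R / 4 := by linarith)
  have hQ2 := quad_approx hd hb hyR2 (show ‖w‖ ≤ R / 4 by linarith)
  have hQ3 := quad_approx hd hb hxR2 (show ‖k‖ ≤ R / 4 by rw [hknorm]; linarith)
  have hyx : y + (w + k) = x + k := by rw [hwdef]; abel
  rw [hyx] at hQ1
  rw [hyw] at hQ2
  -- combine
  have hkey : ‖fderiv ℂ g x k - fderiv ℂ g y k‖ ≤ 48 * M / R ^ 2 * ‖w‖ ^ 2 := by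
    have hid : fderiv ℂ g x k - fderiv ℂ g y k =
        (g (x + k) - g y - fderiv ℂ g y (w + k))
        - (g x - g y - fderiv ℂ g y w)
        - (g (x + k) - g x - fderiv ℂ g x k) := by
      have h1 : fderiv ℂ g y (w + k) = fderiv ℂ g y w + fderiv ℂ g y k := map_add _ _ _
      rw [h1]; abel
    rw [hid]
    have hn1 : ‖w + k‖ ^ 2 ≤ 4 * ‖w‖ ^ 2 := by
      have : ‖w + k‖ ≤ 2 * ‖w‖ := by
        calc ‖w + k‖ ≤ ‖w‖ + ‖k‖ := norm_add_le _ _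
          _ = 2 * ‖w‖ := by rw [hknorm]; ring
      calc ‖w + k‖ ^ 2 ≤ (2 * ‖w‖) ^ 2 := by
            exact pow_le_pow_left₀ (norm_nonneg _) this 2
        _ = 4 * ‖w‖ ^ 2 := by ring
    calc ‖(g (x + k) - g y - fderiv ℂ g y (w + k))
        - (g x - g y - fderiv ℂ g y w)
        - (g (x + k) - g x - fderiv ℂ g x k)‖
        ≤ ‖(g (x + k) - g y - fderiv ℂ g y (w + k)) - (g x - g y - fderiv ℂ g y w)‖
          + ‖g (x + k) - g x - fderiv ℂ g x k‖ := norm_sub_le _ _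
      _ ≤ ‖g (x + k) - g y - fderiv ℂ g y (w + k)‖ + ‖g x - g y - fderiv ℂ g y w‖
          + ‖g (x + k) - g x - fderiv ℂ g x k‖ := by
            have := norm_sub_le (g (x + k) - g y - fderiv ℂ g y (w + k))
              (g x - g y - fderiv ℂ g y w)
            linarith
      _ ≤ 8 * M / R ^ 2 * ‖w + k‖ ^ 2 + 8 * M / R ^ 2 * ‖w‖ ^ 2
          + 8 * M / R ^ 2 * ‖k‖ ^ 2 := by
            exact add_le_add (add_le_add hQ1 hQ2) hQ3
      _ ≤ 48 * M / R ^ 2 * ‖w‖ ^ 2 := by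
            rw [hknorm]
            have h4 : 8 * M / R ^ 2 * ‖w + k‖ ^ 2 ≤ 8 * M / R ^ 2 * (4 * ‖w‖ ^ 2) :=
              mul_le_mul_of_nonneg_left hn1 (by positivity)
            have heq : 8 * M / R ^ 2 * (4 * ‖w‖ ^ 2) + 8 * M / R ^ 2 * ‖w‖ ^ 2
                + 8 * M / R ^ 2 * ‖w‖ ^ 2 = 48 * M / R ^ 2 * ‖w‖ ^ 2 := by ring
            linarith
  -- scale back from k to u
  have hck : fderiv ℂ g x k - fderiv ℂ g y k = c • (fderiv ℂ g x u - fderiv ℂ g y u) := by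
    rw [hkdef, map_smul, map_smul, smul_sub]
  rw [hck] at hkey
  rw [norm_smul] at hkey
  have hcnorm : ‖c‖ = ‖w‖ / ‖u‖ := by
    rw [hcdef, Complex.norm_real, Real.norm_eq_abs, abs_of_pos (by positivity)]
  rw [hcnorm] at hkey
  have hpos : (0:ℝ) < ‖w‖ / ‖u‖ := by positivity
  have h3 : ‖fderiv ℂ g x u - fderiv ℂ g y u‖ ≤ (48 * M / R ^ 2 * ‖w‖ ^ 2) / (‖w‖ / ‖u‖) := by
    rw [le_div_iff₀ hpos]
    calc ‖fderiv ℂ g x u - fderiv ℂ g y u‖ * (‖w‖ / ‖u‖)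
        = ‖w‖ / ‖u‖ * ‖fderiv ℂ g x u - fderiv ℂ g y u‖ := by ring
      _ ≤ 48 * M / R ^ 2 * ‖w‖ ^ 2 := hkey
  refine h3.trans (le_of_eq ?_)
  field_simp

end MultiDim

section Extension

variable {X Y : Type*} [NormedAddCommGroup X] [NormedSpace ℂ X]
  [NormedAddCommGroup Y] [NormedSpace ℂ Y] [CompleteSpace Y]

/-- Two continuous linear maps that agree on a small ball agree everywhere. -/
lemma clm_ext_of_eq_on_ball {δ : ℝ} (hδ : 0 < δ) {T S : X →L[ℂ] Y}
    (h : ∀ w : X, ‖w‖ ≤ δ → T w = S w) : T = S := by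
  ext w
  rcases eq_or_ne w 0 with rfl | hw
  · simp
  have hw' : 0 < ‖w‖ := norm_pos_iff.mpr hw
  set c : ℂ := ((‖w‖ / δ : ℝ) : ℂ) with hcdef
  have hc0 : c ≠ 0 := by
    simp only [hcdef, ne_eq, Complex.ofReal_eq_zero]
    positivity
  have hsmall : ‖c⁻¹ • w‖ ≤ δ := by
    rw [norm_smul, norm_inv, hcdef, Complex.norm_real, Real.norm_eq_abs,
      abs_of_pos (by positivity)]
    rw [inv_div, div_mul_cancel₀ _ hw'.ne']
  have heq := h (c⁻¹ • w) hsmall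
  calc T w = T (c • (c⁻¹ • w)) := by rw [smul_inv_smul₀ hc0]
    _ = c • T (c⁻¹ • w) := map_smul _ _ _
    _ = c • S (c⁻¹ • w) := by rw [heq]
    _ = S (c • (c⁻¹ • w)) := (map_smul _ _ _).symm
    _ = S w := by rw [smul_inv_smul₀ hc0]

/-- Extension of a locally additive/homogeneous/bounded map to a continuous linear map. -/
lemma exists_clm_extension {φ : X → Y} {δ C : ℝ} (hδ : 0 < δ) (hC : 0 ≤ C)
    (hadd : ∀ w₁ w₂ : X, ‖w₁‖ ≤ δ → ‖w₂‖ ≤ δ → φ (w₁ + w₂) = φ w₁ + φ w₂)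
    (hsmul : ∀ (c : ℂ) (w : X), ‖w‖ ≤ δ → ‖c • w‖ ≤ δ → φ (c • w) = c • φ w)
    (hbound : ∀ w : X, ‖w‖ ≤ δ → ‖φ w‖ ≤ C * ‖w‖) :
    ∃ T : X →L[ℂ] Y, ‖T‖ ≤ C ∧ ∀ w : X, ‖w‖ ≤ δ → T w = φ w := by
  -- consistency of rescalings
  have hCONS : ∀ (w : X) (a b : ℝ), 0 < a → 0 < b →
      ‖((a:ℂ))⁻¹ • w‖ ≤ δ → ‖((b:ℂ))⁻¹ • w‖ ≤ δ →
      ((a:ℂ)) • φ (((a:ℂ))⁻¹ • w) = ((b:ℂ)) • φ (((b:ℂ))⁻¹ • w) := by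
    intro w a b ha hb hA hB
    have ha0 : ((a:ℂ)) ≠ 0 := by simp [ha.ne']
    have hb0 : ((b:ℂ)) ≠ 0 := by simp [hb.ne']
    have key : φ (((a:ℂ))⁻¹ • w) = ((a:ℂ))⁻¹ • ((b:ℂ)) • φ (((b:ℂ))⁻¹ • w) := by
      have hrw : ((a:ℂ))⁻¹ • w = (((a:ℂ))⁻¹ * (b:ℂ)) • (((b:ℂ))⁻¹ • w) := by
        rw [smul_smul]
        congr 1
        field_simp
      rw [hrw, hsmul _ _ hB (by rw [← hrw]; exact hA), smul_smul]
    rw [key, smul_smul, mul_inv_cancel₀ ha0, one_smul]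
  set m : X → ℝ := fun w => ‖w‖ / δ + 1 with hmdef
  have hm : ∀ w : X, 0 < m w := fun w => by positivity
  have hms : ∀ w : X, ‖((m w : ℝ) : ℂ)⁻¹ • w‖ ≤ δ := by
    intro w
    rw [norm_smul, norm_inv, Complex.norm_real, Real.norm_eq_abs, abs_of_pos (hm w)]
    rw [inv_mul_le_iff₀ (hm w), hmdef]
    have h1 : 0 < ‖w‖ / δ + 1 := by positivity
    calc ‖w‖ = (‖w‖ / δ) * δ := by field_simp
      _ ≤ (‖w‖ / δ + 1) * δ := by
          refine mul_le_mul_of_nonneg_right ?_ hδ.le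
          linarith
  set T0 : X → Y := fun w => ((m w : ℝ) : ℂ) • φ (((m w : ℝ) : ℂ)⁻¹ • w) with hT0def
  have hT0eq : ∀ w : X, ‖w‖ ≤ δ → T0 w = φ w := by
    intro w hw
    have h1 : ‖((1:ℝ) : ℂ)⁻¹ • w‖ ≤ δ := by simpa using hw
    have := hCONS w (m w) 1 (hm w) one_pos (hms w) h1
    rw [hT0def]
    simpa using this
  have hT0scale : ∀ (w : X) (a : ℝ), 0 < a → ‖((a:ℂ))⁻¹ • w‖ ≤ δ → T0 w = ((a:ℂ)) • φ (((a:ℂ))⁻¹ • w) :=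
    fun w a ha hA => hCONS w (m w) a (hm w) ha (hms w) hA
  have hadd' : ∀ w₁ w₂ : X, T0 (w₁ + w₂) = T0 w₁ + T0 w₂ := by
    intro w₁ w₂
    set K : ℝ := (‖w₁‖ + ‖w₂‖) / δ + 1 with hKdef
    have hK : 0 < K := by positivity
    have hKle : ∀ w : X, ‖w‖ ≤ ‖w₁‖ + ‖w₂‖ → ‖((K:ℂ))⁻¹ • w‖ ≤ δ := by
      intro w hw
      rw [norm_smul, norm_inv, Complex.norm_real, Real.norm_eq_abs, abs_of_pos hK]
      rw [inv_mul_le_iff₀ hK, hKdef]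
      calc ‖w‖ ≤ ‖w₁‖ + ‖w₂‖ := hw
        _ = ((‖w₁‖ + ‖w₂‖) / δ) * δ := by field_simp
        _ ≤ ((‖w₁‖ + ‖w₂‖) / δ + 1) * δ := by
            refine mul_le_mul_of_nonneg_right ?_ hδ.le
            linarith
    have h1 : ‖((K:ℂ))⁻¹ • w₁‖ ≤ δ := hKle w₁ (by linarith [norm_nonneg w₂])
    have h2 : ‖((K:ℂ))⁻¹ • w₂‖ ≤ δ := hKle w₂ (by linarith [norm_nonneg w₁])
    have h12 : ‖((K:ℂ))⁻¹ • (w₁ + w₂)‖ ≤ δ := hKle _ (norm_add_le _ _)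
    rw [hT0scale (w₁ + w₂) K hK h12, hT0scale w₁ K hK h1, hT0scale w₂ K hK h2]
    rw [smul_add, hadd _ _ h1 h2, smul_add]
  have hsmul' : ∀ (a : ℂ) (w : X), T0 (a • w) = a • T0 w := by
    intro a w
    set K : ℝ := (‖a‖ + 1) * (‖w‖ / δ + 1) with hKdef
    have hK : 0 < K := by positivity
    have hKw : ‖((K:ℂ))⁻¹ • w‖ ≤ δ := by
      rw [norm_smul, norm_inv, Complex.norm_real, Real.norm_eq_abs, abs_of_pos hK]
      rw [inv_mul_le_iff₀ hK, hKdef]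
      have h1 : ‖w‖ ≤ (‖w‖ / δ + 1) * δ := by
        calc ‖w‖ = (‖w‖ / δ) * δ := by field_simp
          _ ≤ (‖w‖ / δ + 1) * δ := by
              refine mul_le_mul_of_nonneg_right (by linarith) hδ.le
      calc ‖w‖ ≤ (‖w‖ / δ + 1) * δ := h1
        _ ≤ (‖a‖ + 1) * (‖w‖ / δ + 1) * δ := by
            have h2 : 0 ≤ (‖w‖ / δ + 1) * δ := by positivity
            nlinarith [norm_nonneg a]
    have hKaw : ‖a • (((K:ℂ))⁻¹ • w)‖ ≤ δ := by
      rw [norm_smul, norm_smul, norm_inv, Complex.norm_real, Real.norm_eq_abs, abs_of_pos hK]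
      rw [hKdef]
      have h2 : ‖a‖ * (((‖a‖ + 1) * (‖w‖ / δ + 1))⁻¹ * ‖w‖) ≤
          ((‖a‖ + 1) * (‖w‖ / δ + 1))⁻¹ * ((‖a‖ + 1) * ‖w‖) := by
        rw [← mul_assoc, mul_comm ‖a‖, mul_assoc]
        refine mul_le_mul_of_nonneg_left ?_ (by positivity)
        refine mul_le_mul_of_nonneg_right (by linarith [norm_nonneg a]) (norm_nonneg w)
      refine h2.trans ?_
      rw [inv_mul_le_iff₀ (by positivity)]
      calc (‖a‖ + 1) * ‖w‖ = (‖a‖ + 1) * ((‖w‖ / δ) * δ) := by field_simp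
        _ ≤ (‖a‖ + 1) * ((‖w‖ / δ + 1) * δ) := by
            refine mul_le_mul_of_nonneg_left ?_ (by positivity)
            refine mul_le_mul_of_nonneg_right (by linarith) hδ.le
        _ = δ * ((‖a‖ + 1) * (‖w‖ / δ + 1)) := by ring
        _ ≤ (‖a‖ + 1) * (‖w‖ / δ + 1) * δ := le_of_eq (by ring)
    have hKaw' : ‖((K:ℂ))⁻¹ • (a • w)‖ ≤ δ := by
      rw [smul_comm]; exact hKaw
    rw [hT0scale (a • w) K hK hKaw', hT0scale w K hK hKw]
    rw [smul_comm ((K:ℂ))⁻¹ a, hsmul a _ hKw hKaw, smul_smul, smul_smul, mul_comm]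
  have hbound' : ∀ w : X, ‖T0 w‖ ≤ C * ‖w‖ := by
    intro w
    rw [hT0def]
    simp only
    rw [norm_smul, Complex.norm_real, Real.norm_eq_abs, abs_of_pos (hm w)]
    calc m w * ‖φ (((m w : ℝ) : ℂ)⁻¹ • w)‖ ≤ m w * (C * ‖((m w : ℝ) : ℂ)⁻¹ • w‖) :=
          mul_le_mul_of_nonneg_left (hbound _ (hms w)) (hm w).le
      _ = C * ‖w‖ := by
          rw [norm_smul, norm_inv, Complex.norm_real, Real.norm_eq_abs, abs_of_pos (hm w)]
          field_simp
          rw [mul_assoc, mul_div_cancel_left₀ _ (hm w).ne']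
  refine ⟨LinearMap.mkContinuous ⟨⟨T0, hadd'⟩, hsmul'⟩ C hbound', ?_, ?_⟩
  · exact LinearMap.mkContinuous_norm_le _ hC _
  · intro w hw
    exact hT0eq w hw

end Extension

section Step1

set_option maxHeartbeats 1000000

variable {X Y : Type*} [NormedAddCommGroup X] [NormedSpace ℂ X]
  [NormedAddCommGroup Y] [NormedSpace ℂ Y] [CompleteSpace Y]

/-- If `g` is complex differentiable and bounded on a ball, then its Fréchet
derivative is complex differentiable at the center. -/
lemma differentiableAt_fderiv {g : X → Y} {x₀ : X} {R M : ℝ} (hR : 0 < R)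
    (hd : ∀ y ∈ ball x₀ R, DifferentiableAt ℂ g y)
    (hb : ∀ y ∈ ball x₀ R, ‖g y‖ ≤ M) :
    DifferentiableAt ℂ (fderiv ℂ g) x₀ := by
  have hM : 0 ≤ M := (norm_nonneg _).trans (hb x₀ (mem_ball_self hR))
  set D := fderiv ℂ g with hDdef
  -- Key construction via locally uniform limits of difference quotients
  have key : ∀ (d w : X), d ≠ 0 → ‖d‖ ≤ R / 16 →
      DifferentiableOn ℂ (fun z : ℂ => D (x₀ + z • d) w) (ball (0:ℂ) (R / (4 * ‖d‖)))
      ∧ Tendsto (fun t : ℂ => t⁻¹ • (D (x₀ + t • w) d - D x₀ d)) (𝓝[≠] (0:ℂ))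
          (𝓝 (deriv (fun z : ℂ => D (x₀ + z • d) w) 0)) := by
    intro d w hd0 hdle
    have hdn : 0 < ‖d‖ := norm_pos_iff.mpr hd0
    set s : Set ℂ := ball (0:ℂ) (R / (4 * ‖d‖)) with hsdef
    have hsopen : IsOpen s := isOpen_ball
    have h0s : (0:ℂ) ∈ s := by
      rw [hsdef, mem_ball, dist_self]
      positivity
    have hzd : ∀ z : ℂ, z ∈ s → ‖z • d‖ < R / 4 := by
      intro z hz
      rw [hsdef, mem_ball, dist_zero_right] at hz
      rw [norm_smul]
      calc ‖z‖ * ‖d‖ < (R / (4 * ‖d‖)) * ‖d‖ := mul_lt_mul_of_pos_right hz hdn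
        _ = R / 4 := by field_simp
    have hzdU : ∀ z : ℂ, z ∈ s → x₀ + z • d ∈ ball x₀ (R / 2) := by
      intro z hz
      rw [mem_ball, dist_eq_norm, add_sub_cancel_left]
      have := hzd z hz
      linarith
    have hzdU' : ∀ z : ℂ, z ∈ s → x₀ + z • d ∈ ball x₀ R := by
      intro z hz
      exact mem_ball.mpr (lt_of_lt_of_le (mem_ball.mp (hzdU z hz)) (by linarith))
    set F : ℂ → ℂ → Y := fun t z => t⁻¹ • (g ((x₀ + t • w) + z • d) - g (x₀ + z • d))
      with hFdef
    have hev : ∀ᶠ t : ℂ in 𝓝[≠] (0:ℂ), ‖t‖ * (‖w‖ + 1) < R / 4 ∧ t ≠ 0 := by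
      have h1 : ∀ᶠ t : ℂ in 𝓝 (0:ℂ), ‖t‖ * (‖w‖ + 1) < R / 4 := by
        filter_upwards [ball_mem_nhds (0:ℂ) (show (0:ℝ) < R / (4 * (‖w‖ + 1)) by positivity)]
          with t ht
        rw [mem_ball, dist_zero_right] at ht
        calc ‖t‖ * (‖w‖ + 1) < (R / (4 * (‖w‖ + 1))) * (‖w‖ + 1) :=
              mul_lt_mul_of_pos_right ht (by positivity)
          _ = R / 4 := by field_simp
      exact (eventually_nhdsWithin_of_eventually_nhds h1).and eventually_mem_nhdsWithin
    have hmem1 : ∀ (t z : ℂ), ‖t‖ * (‖w‖ + 1) < R / 4 → z ∈ s →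
        (x₀ + t • w) + z • d ∈ ball x₀ R := by
      intro t z ht hz
      rw [mem_ball, dist_eq_norm]
      have heq : (x₀ + t • w) + z • d - x₀ = t • w + z • d := by abel
      rw [heq]
      have h1 : ‖t • w‖ < R / 4 := by
        rw [norm_smul]
        calc ‖t‖ * ‖w‖ ≤ ‖t‖ * (‖w‖ + 1) := by
              refine mul_le_mul_of_nonneg_left (by linarith) (norm_nonneg t)
          _ < R / 4 := ht
      calc ‖t • w + z • d‖ ≤ ‖t • w‖ + ‖z • d‖ := norm_add_le _ _
        _ < R := by have := hzd z hz; linarith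
    have hFd : ∀ᶠ t in 𝓝[≠] (0:ℂ), DifferentiableOn ℂ (F t) s := by
      filter_upwards [hev] with t ht
      intro z hz
      refine DifferentiableAt.differentiableWithinAt ?_
      refine DifferentiableAt.const_smul ?_ _
      refine DifferentiableAt.sub ?_ ?_
      · exact (hasDerivAt_line (hd _ (hmem1 t z ht.1 hz))).differentiableAt
      · exact (hasDerivAt_line (hd _ (hzdU' z hz))).differentiableAt
    have htuo : TendstoUniformlyOn F (fun z => D (x₀ + z • d) w) (𝓝[≠] (0:ℂ)) s := by
      rw [Metric.tendstoUniformlyOn_iff]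
      intro ε hε
      set CB : ℝ := 8 * M / R ^ 2 * (‖w‖ + 1) ^ 2 with hCBdef
      have hCB : 0 ≤ CB := by positivity
      have hev2 : ∀ᶠ t : ℂ in 𝓝[≠] (0:ℂ), ‖t‖ * (CB + 1) < ε := by
        refine eventually_nhdsWithin_of_eventually_nhds ?_
        filter_upwards [ball_mem_nhds (0:ℂ) (show (0:ℝ) < ε / (CB + 1) by positivity)]
          with t ht
        rw [mem_ball, dist_zero_right] at ht
        calc ‖t‖ * (CB + 1) < (ε / (CB + 1)) * (CB + 1) :=
              mul_lt_mul_of_pos_right ht (by positivity)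
          _ = ε := by field_simp
      filter_upwards [hev, hev2] with t ht ht2
      intro z hz
      obtain ⟨ht1, ht0⟩ := ht
      have htn : ‖t‖ ≠ 0 := fun h => ht0 (norm_eq_zero.mp h)
      rw [dist_eq_norm]
      set y := x₀ + z • d with hydef
      have hyb : y ∈ ball x₀ (R / 2) := hzdU z hz
      have htw : ‖t • w‖ ≤ R / 4 := by
        rw [norm_smul]
        calc ‖t‖ * ‖w‖ ≤ ‖t‖ * (‖w‖ + 1) := by
              refine mul_le_mul_of_nonneg_left (by linarith) (norm_nonneg t)
          _ ≤ R / 4 := ht1.le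
      have hq := quad_approx hd hb hyb htw
      have hrw : D y w - F t z = -(t⁻¹ • (g (y + t • w) - g y - D y (t • w))) := by
        rw [hFdef]
        simp only
        have h1 : (x₀ + t • w) + z • d = y + t • w := by rw [hydef]; abel
        rw [h1]
        have h2 : t⁻¹ • D y (t • w) = D y w := by
          rw [(D y).map_smul, smul_smul, inv_mul_cancel₀ ht0, one_smul]
        rw [← h2]
        module
      rw [hrw, norm_neg, norm_smul, norm_inv]
      calc ‖t‖⁻¹ * ‖g (y + t • w) - g y - D y (t • w)‖
          ≤ ‖t‖⁻¹ * (8 * M / R ^ 2 * ‖t • w‖ ^ 2) := by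
            exact mul_le_mul_of_nonneg_left hq (by positivity)
        _ ≤ ‖t‖ * (CB + 1) := by
            rw [norm_smul, hCBdef]
            rw [mul_pow]
            have hw1 : ‖w‖ ^ 2 ≤ (‖w‖ + 1) ^ 2 := by
              refine pow_le_pow_left₀ (norm_nonneg w) (by linarith) 2
            have htpos : 0 < ‖t‖ := lt_of_le_of_ne (norm_nonneg t) (Ne.symm htn)
            rw [inv_mul_le_iff₀ htpos]
            calc 8 * M / R ^ 2 * (‖t‖ ^ 2 * ‖w‖ ^ 2)
                ≤ 8 * M / R ^ 2 * (‖t‖ ^ 2 * (‖w‖ + 1) ^ 2) := by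
                  refine mul_le_mul_of_nonneg_left ?_ (by positivity)
                  exact mul_le_mul_of_nonneg_left hw1 (by positivity)
              _ = (8 * M / R ^ 2 * (‖w‖ + 1) ^ 2) * ‖t‖ * ‖t‖ := by ring
              _ ≤ (8 * M / R ^ 2 * (‖w‖ + 1) ^ 2 + 1) * ‖t‖ * ‖t‖ := by
                  refine mul_le_mul_of_nonneg_right ?_ (norm_nonneg t)
                  refine mul_le_mul_of_nonneg_right (by linarith) (norm_nonneg t)
              _ = ‖t‖ * (‖t‖ * (8 * M / R ^ 2 * (‖w‖ + 1) ^ 2 + 1)) := by ring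
        _ < ε := ht2
    have htlu := htuo.tendstoLocallyUniformlyOn
    have hdiffψ := htlu.differentiableOn hFd hsopen
    have hder := htlu.deriv hFd hsopen
    have htend := hder.tendsto_at h0s
    refine ⟨hdiffψ, ?_⟩
    refine htend.congr' ?_
    filter_upwards [hev] with t ht
    obtain ⟨ht1, ht0⟩ := ht
    have h1 : HasDerivAt (fun z : ℂ => g ((x₀ + t • w) + z • d)) (D ((x₀ + t • w)) d) 0 := by
      have hdm : DifferentiableAt ℂ g ((x₀ + t • w) + (0:ℂ) • d) := by
        refine hd _ ?_
        have := hmem1 t 0 ht1 h0s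
        simpa using this
      have := hasDerivAt_line hdm
      simpa using this
    have h2 : HasDerivAt (fun z : ℂ => g (x₀ + z • d)) (D x₀ d) 0 := by
      have hdm : DifferentiableAt ℂ g (x₀ + (0:ℂ) • d) := by
        have h0 : x₀ + (0:ℂ) • d = x₀ := by simp
        rw [h0]
        exact hd _ (mem_ball_self hR)
      have := hasDerivAt_line hdm
      simpa using this
    have h3 := ((h1.sub h2).const_smul t⁻¹).deriv
    exact h3
  -- the candidate second derivative as a bilinear-type function
  set b : X → X → Y := fun v w => deriv (fun z : ℂ => D (x₀ + z • w) v) 0 with hbdef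
  have hbzero : ∀ v, b v 0 = 0 := by
    intro v
    rw [hbdef]
    simp only [smul_zero, add_zero]
    simp [deriv_const]
  have hslope : ∀ v w, ‖w‖ ≤ R / 16 →
      Tendsto (fun t : ℂ => t⁻¹ • (D (x₀ + t • v) w - D x₀ w)) (𝓝[≠] (0:ℂ)) (𝓝 (b v w)) := by
    intro v w hwle
    rcases eq_or_ne w 0 with rfl | hw0
    · rw [hbzero]
      have : (fun t : ℂ => t⁻¹ • (D (x₀ + t • v) 0 - D x₀ 0)) = fun _ => (0:Y) := by
        funext t; simp
      rw [this]
      exact tendsto_const_nhds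
    · exact (key w v hw0 hwle).2
  have hbbound : ∀ v w, ‖w‖ ≤ R / 16 → ‖b v w‖ ≤ 48 * M / R ^ 2 * ‖v‖ * ‖w‖ := by
    intro v w hwle
    refine le_of_tendsto (hslope v w hwle).norm ?_
    have hev : ∀ᶠ t : ℂ in 𝓝[≠] (0:ℂ), ‖t‖ * (‖v‖ + 1) < R / 16 ∧ t ≠ 0 := by
      refine Filter.Eventually.and ?_ eventually_mem_nhdsWithin
      refine eventually_nhdsWithin_of_eventually_nhds ?_
      filter_upwards [ball_mem_nhds (0:ℂ) (show (0:ℝ) < R / (16 * (‖v‖ + 1)) by positivity)]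
        with t ht
      rw [mem_ball, dist_zero_right] at ht
      calc ‖t‖ * (‖v‖ + 1) < (R / (16 * (‖v‖ + 1))) * (‖v‖ + 1) :=
            mul_lt_mul_of_pos_right ht (by positivity)
        _ = R / 16 := by field_simp
    filter_upwards [hev] with t ht
    obtain ⟨ht1, ht0⟩ := ht
    have htpos : 0 < ‖t‖ := norm_pos_iff.mpr ht0
    have hmem : x₀ + t • v ∈ ball x₀ (R / 16) := by
      rw [mem_ball, dist_eq_norm, add_sub_cancel_left, norm_smul]
      calc ‖t‖ * ‖v‖ ≤ ‖t‖ * (‖v‖ + 1) := by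
            refine mul_le_mul_of_nonneg_left (by linarith) (norm_nonneg t)
        _ < R / 16 := ht1
    have hlip := fderiv_lip hd hb hmem (mem_ball_self (by positivity)) w
    rw [norm_smul, norm_inv]
    have heq : x₀ + t • v - x₀ = t • v := by abel
    rw [heq, norm_smul] at hlip
    calc ‖t‖⁻¹ * ‖D (x₀ + t • v) w - D x₀ w‖
        ≤ ‖t‖⁻¹ * (48 * M / R ^ 2 * (‖t‖ * ‖v‖) * ‖w‖) := by
          exact mul_le_mul_of_nonneg_left hlip (by positivity)
      _ = 48 * M / R ^ 2 * ‖v‖ * ‖w‖ := by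
          have h9 : ‖t‖⁻¹ * (48 * M / R ^ 2 * (‖t‖ * ‖v‖) * ‖w‖)
              = (‖t‖⁻¹ * ‖t‖) * (48 * M / R ^ 2 * ‖v‖ * ‖w‖) := by ring
          rw [h9, inv_mul_cancel₀ htpos.ne', one_mul]
  have hbaddw : ∀ v w₁ w₂, ‖w₁‖ ≤ R / 32 → ‖w₂‖ ≤ R / 32 →
      b v (w₁ + w₂) = b v w₁ + b v w₂ := by
    intro v w₁ w₂ h1 h2
    have h12 : ‖w₁ + w₂‖ ≤ R / 16 := le_trans (norm_add_le _ _) (by linarith)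
    refine tendsto_nhds_unique (hslope v _ h12) ?_
    have := (hslope v w₁ (by linarith)).add (hslope v w₂ (by linarith))
    refine this.congr fun t => ?_
    simp only [map_add]
    rw [← smul_add]
    congr 1
    abel
  have hbsmulw : ∀ (v : X) (a : ℂ) (w : X), ‖w‖ ≤ R / 16 → ‖a • w‖ ≤ R / 16 →
      b v (a • w) = a • b v w := by
    intro v a w h1 h2
    refine tendsto_nhds_unique (hslope v _ h2) ?_
    have := (hslope v w h1).const_smul a
    refine this.congr fun t => ?_
    simp only [map_smul]
    rw [← smul_sub, smul_comm]
  have hdiffAt0 : ∀ (w v : X), w ≠ 0 → ‖w‖ ≤ R / 16 →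
      DifferentiableAt ℂ (fun z : ℂ => D (x₀ + z • w) v) 0 := by
    intro w v hw0 hwle
    have hdn : 0 < ‖w‖ := norm_pos_iff.mpr hw0
    have h0s : (0:ℂ) ∈ ball (0:ℂ) (R / (4 * ‖w‖)) := by
      rw [mem_ball, dist_self]; positivity
    exact (key w v hw0 hwle).1.differentiableAt (isOpen_ball.mem_nhds h0s)
  have hbaddv : ∀ v₁ v₂ w, ‖w‖ ≤ R / 16 → b (v₁ + v₂) w = b v₁ w + b v₂ w := by
    intro v₁ v₂ w hwle
    rcases eq_or_ne w 0 with rfl | hw0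
    · simp [hbzero]
    rw [hbdef]
    simp only
    have hfun : (fun z : ℂ => D (x₀ + z • w) (v₁ + v₂)) =
        fun z : ℂ => D (x₀ + z • w) v₁ + D (x₀ + z • w) v₂ := by
      funext z; exact map_add _ _ _
    rw [hfun]
    exact deriv_add (hdiffAt0 w v₁ hw0 hwle) (hdiffAt0 w v₂ hw0 hwle)
  have hbsmulv : ∀ (a : ℂ) (v w : X), ‖w‖ ≤ R / 16 → b (a • v) w = a • b v w := by
    intro a v w hwle
    rcases eq_or_ne w 0 with rfl | hw0
    · simp [hbzero]
    rw [hbdef]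
    simp only
    have hfun : (fun z : ℂ => D (x₀ + z • w) (a • v)) =
        fun z : ℂ => a • D (x₀ + z • w) v := by
      funext z; exact map_smul _ _ _
    rw [hfun]
    exact deriv_const_smul a (hdiffAt0 w v hw0 hwle)
  -- build the inner continuous linear maps
  have hTv : ∀ v : X, ∃ T : X →L[ℂ] Y, ‖T‖ ≤ 48 * M / R ^ 2 * ‖v‖ ∧
      ∀ w : X, ‖w‖ ≤ R / 32 → T w = b v w := by
    intro v
    refine exists_clm_extension (by positivity : (0:ℝ) < R / 32) (by positivity) ?_ ?_ ?_
    · intro w₁ w₂ h1 h2; exact hbaddw v w₁ w₂ h1 h2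
    · intro a w h1 h2
      exact hbsmulw v a w (le_trans h1 (by linarith)) (le_trans h2 (by linarith))
    · intro w h1; exact hbbound v w (le_trans h1 (by linarith))
  choose T hTnorm hTeq using hTv
  have haddT : ∀ v₁ v₂, T (v₁ + v₂) = T v₁ + T v₂ := by
    intro v₁ v₂
    refine clm_ext_of_eq_on_ball (show (0:ℝ) < R / 32 by positivity) fun w hw => ?_
    rw [ContinuousLinearMap.add_apply, hTeq _ _ hw, hTeq _ _ hw, hTeq _ _ hw]
    exact hbaddv v₁ v₂ w (by linarith)
  have hsmulT : ∀ (a : ℂ) (v : X), T (a • v) = a • T v := by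
    intro a v
    refine clm_ext_of_eq_on_ball (show (0:ℝ) < R / 32 by positivity) fun w hw => ?_
    rw [ContinuousLinearMap.smul_apply, hTeq _ _ hw, hTeq _ _ hw]
    exact hbsmulv a v w (by linarith)
  set B : X →L[ℂ] X →L[ℂ] Y :=
    LinearMap.mkContinuous ⟨⟨T, haddT⟩, hsmulT⟩ (48 * M / R ^ 2)
      (fun v => by simpa [mul_assoc] using hTnorm v) with hBdef
  have hBT : ∀ v, B v = T v := fun v => rfl
  -- symmetry
  have hsym : ∀ v w, v ≠ 0 → w ≠ 0 → ‖v‖ ≤ R / 16 → ‖w‖ ≤ R / 16 → b v w = b w v := by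
    intro v w hv0 hw0 hvle hwle
    have h1 := hslope v w hwle
    have h2 := (hdiffAt0 v w hv0 hvle).hasDerivAt
    rw [hasDerivAt_iff_tendsto_slope] at h2
    have h3 : Tendsto (fun t : ℂ => t⁻¹ • (D (x₀ + t • v) w - D x₀ w)) (𝓝[≠] (0:ℂ))
        (𝓝 (deriv (fun z : ℂ => D (x₀ + z • v) w) 0)) := by
      refine h2.congr fun t => ?_
      rw [slope_def_module]
      simp
    exact tendsto_nhds_unique h1 h3
  have hBapp : ∀ (k w : X), k ≠ 0 → ‖k‖ ≤ R / 32 → ‖w‖ ≤ R / 32 →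
      B k w = deriv (fun z : ℂ => D (x₀ + z • k) w) 0 := by
    intro k w hk0 hk hw
    rw [hBT, hTeq k w hw]
    rcases eq_or_ne w 0 with rfl | hw0
    · rw [hbzero]
      have : (fun z : ℂ => D (x₀ + z • k) (0:X)) = fun _ => (0:Y) := by
        funext z; simp
      rw [this]
      simp [deriv_const]
    · rw [hsym k w hk0 hw0 (by linarith) (by linarith)]
  -- conclude
  have hfd : HasFDerivAt D B x₀ := by
    rw [hasFDerivAt_iff_isLittleO_nhds_zero]
    rw [Asymptotics.isLittleO_iff]
    intro ε hε
    set CC : ℝ := 512 * M / R ^ 3 with hCCdef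
    have hCC : 0 ≤ CC := by positivity
    have hev3 : ∀ᶠ k : X in 𝓝 0, ‖k‖ ≤ R / 32 ∧ ‖k‖ * (CC + 1) ≤ ε := by
      have hδ : (0:ℝ) < min (R / 32) (ε / (CC + 1)) := by positivity
      filter_upwards [closedBall_mem_nhds (0:X) hδ] with k hk
      rw [mem_closedBall, dist_zero_right] at hk
      constructor
      · exact hk.trans (min_le_left _ _)
      · have h1 : ‖k‖ ≤ ε / (CC + 1) := hk.trans (min_le_right _ _)
        calc ‖k‖ * (CC + 1) ≤ (ε / (CC + 1)) * (CC + 1) :=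
              mul_le_mul_of_nonneg_right h1 (by positivity)
          _ = ε := by field_simp
    filter_upwards [hev3] with k hk
    obtain ⟨hk1, hk2⟩ := hk
    rcases eq_or_ne k 0 with rfl | hk0
    · simp
    have hkn : 0 < ‖k‖ := norm_pos_iff.mpr hk0
    set ρχ : ℝ := R / (8 * ‖k‖) with hρχdef
    have hρχ : 0 < ρχ := by positivity
    have hest : ∀ w : X, ‖w‖ ≤ R / 32 →
        ‖(D (x₀ + k) - D x₀ - B k) w‖ ≤ CC * ‖k‖ ^ 2 * ‖w‖ := by
      intro w hw
      set χ : ℂ → Y := fun z => D (x₀ + z • k) w with hχdef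
      have hχmem : ∀ t : ℂ, t ∈ closedBall (0:ℂ) ρχ → x₀ + t • k ∈ ball x₀ (R / 2) := by
        intro t ht
        rw [mem_closedBall, dist_zero_right] at ht
        rw [mem_ball, dist_eq_norm, add_sub_cancel_left, norm_smul]
        calc ‖t‖ * ‖k‖ ≤ ρχ * ‖k‖ := mul_le_mul_of_nonneg_right ht hkn.le
          _ = R / 8 := by rw [hρχdef]; field_simp
          _ < R / 2 := by linarith
      have hχd : ∀ t ∈ closedBall (0:ℂ) ρχ, DifferentiableAt ℂ χ t := by
        intro t ht
        rw [mem_closedBall, dist_zero_right] at ht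
        have hts : t ∈ ball (0:ℂ) (R / (4 * ‖k‖)) := by
          rw [mem_ball, dist_zero_right]
          calc ‖t‖ ≤ ρχ := ht
            _ < R / (4 * ‖k‖) := by
              rw [hρχdef]
              refine div_lt_div_of_pos_left (by positivity) (by positivity) ?_
              nlinarith
        exact (key k w hk0 (by linarith)).1.differentiableAt (isOpen_ball.mem_nhds hts)
      have hχb : ∀ t ∈ closedBall (0:ℂ) ρχ, ‖χ t‖ ≤ (4 * M / R) * ‖w‖ := by
        intro t ht
        calc ‖χ t‖ ≤ ‖D (x₀ + t • k)‖ * ‖w‖ := (D _).le_opNorm w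
          _ ≤ (4 * M / R) * ‖w‖ := by
              refine mul_le_mul_of_nonneg_right ?_ (norm_nonneg w)
              exact norm_fderiv_le_of_ball hd hb (hχmem t ht)
      have hw1 : ‖(1:ℂ)‖ ≤ ρχ / 2 := by
        rw [norm_one, hρχdef]
        rw [le_div_iff₀ (by norm_num : (0:ℝ) < 2)]
        rw [le_div_iff₀ (by positivity)]
        nlinarith
      have htb := taylor_two_bound hρχ hχd hχb hw1
      have hχ1 : χ 1 = D (x₀ + k) w := by rw [hχdef]; simp
      have hχ0 : χ 0 = D x₀ w := by rw [hχdef]; simp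
      have hχder : deriv χ 0 = B k w := (hBapp k w hk0 hk1 hw).symm
      rw [hχ1, hχ0, hχder] at htb
      simp only [norm_one, one_pow, mul_one, one_smul] at htb
      have heq : (D (x₀ + k) - D x₀ - B k) w = D (x₀ + k) w - D x₀ w - B k w := by
        simp [ContinuousLinearMap.sub_apply]
      rw [heq]
      refine htb.trans (le_of_eq ?_)
      rw [hCCdef, hρχdef]
      field_simp
      ring
    have hop : ‖D (x₀ + k) - D x₀ - B k‖ ≤ CC * ‖k‖ ^ 2 := by
      refine ContinuousLinearMap.opNorm_le_of_ball
        (show (0:ℝ) < R / 32 by positivity) (by positivity) ?_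
      intro w hwball
      exact hest w (le_of_lt (by rwa [mem_ball, dist_zero_right] at hwball))
    refine hop.trans ?_
    calc CC * ‖k‖ ^ 2 = (CC * ‖k‖) * ‖k‖ := by ring
      _ ≤ ε * ‖k‖ := by
          refine mul_le_mul_of_nonneg_right ?_ (norm_nonneg k)
          calc CC * ‖k‖ ≤ (CC + 1) * ‖k‖ :=
                mul_le_mul_of_nonneg_right (by linarith) (norm_nonneg k)
            _ ≤ ε := by rw [mul_comm]; exact hk2
      _ = ε * ‖k‖ := rfl
  exact hfd.differentiableAt

end Step1

set_option maxHeartbeats 1000000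

section Smooth

variable {X Y : Type*} [NormedAddCommGroup X] [NormedSpace ℂ X]
  [NormedAddCommGroup Y] [NormedSpace ℂ Y] [CompleteSpace Y]

/-- Complex differentiability on an open set implies differentiability of all
iterated derivatives (Banach-space version). -/
lemma differentiableAt_iteratedFDeriv {U : Set X} (hU : IsOpen U) {g : X → Y}
    (hg : ∀ x ∈ U, DifferentiableAt ℂ g x) (n : ℕ) :
    ∀ x ∈ U, DifferentiableAt ℂ (iteratedFDeriv ℂ n g) x := by
  induction n with
  | zero =>
    intro x hx
    rw [iteratedFDeriv_zero_eq_comp]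
    exact (LinearIsometryEquiv.comp_differentiableAt_iff _).mpr (hg x hx)
  | succ n ih =>
    intro x hx
    have hcont : ContinuousAt (iteratedFDeriv ℂ n g) x := (ih x hx).continuousAt
    obtain ⟨δ₁, hδ₁, hδb⟩ := Metric.continuousAt_iff.mp hcont 1 one_pos
    obtain ⟨δ₂, hδ₂, hδU⟩ := Metric.isOpen_iff.mp hU x hx
    set δ := min δ₁ δ₂ with hδdef
    have hδpos : 0 < δ := lt_min hδ₁ hδ₂
    have hsub : ball x δ ⊆ U := (ball_subset_ball (min_le_right _ _)).trans hδU
    have hdd : ∀ y ∈ ball x δ, DifferentiableAt ℂ (iteratedFDeriv ℂ n g) y :=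
      fun y hy => ih y (hsub hy)
    have hbb : ∀ y ∈ ball x δ, ‖iteratedFDeriv ℂ n g y‖ ≤ ‖iteratedFDeriv ℂ n g x‖ + 1 := by
      intro y hy
      have h1 : dist y x < δ₁ := lt_of_lt_of_le (mem_ball.mp hy) (min_le_left _ _)
      have h2 := hδb h1
      rw [dist_eq_norm] at h2
      have h3 : ‖iteratedFDeriv ℂ n g y‖ - ‖iteratedFDeriv ℂ n g x‖
          ≤ ‖iteratedFDeriv ℂ n g y - iteratedFDeriv ℂ n g x‖ := norm_sub_norm_le _ _
      linarith
    have hstep := differentiableAt_fderiv hδpos hdd hbb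
    rw [iteratedFDeriv_succ_eq_comp_left]
    exact ((continuousMultilinearCurryLeftEquiv ℂ (fun _ : Fin (n+1) => X)
      Y).symm.comp_differentiableAt_iff).mpr hstep

lemma norm_iteratedFDeriv_succ_eq {g : X → Y} {n : ℕ} (x : X) :
    ‖iteratedFDeriv ℂ (n + 1) g x‖ = ‖fderiv ℂ (iteratedFDeriv ℂ n g) x‖ := by
  rw [iteratedFDeriv_succ_eq_comp_left]
  exact LinearIsometryEquiv.norm_map _ _

end Smooth

section JCAux

variable {X Y E : Type*} [NormedAddCommGroup X] [NormedSpace ℂ X]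
  [NormedAddCommGroup Y] [NormedSpace ℂ Y] [CompleteSpace Y] [TopologicalSpace E]

/-- Joint continuity from separate continuity plus uniform local bounds. -/
lemma joint_continuity_aux {U : Set X} {n : ℕ}
    (g : E → X → ContinuousMultilinearMap ℂ (fun _ : Fin n => X) Y)
    (hloc : ∀ x₀ ∈ U, ∃ r M L : ℝ, 0 < r ∧ ball x₀ r ⊆ U ∧ 0 ≤ M ∧ 0 ≤ L ∧
      (∀ s, ∀ x ∈ ball x₀ r, ‖g s x‖ ≤ M) ∧
      (∀ s, ∀ x ∈ ball x₀ r, ∀ y ∈ ball x₀ r, ‖g s x - g s y‖ ≤ L * ‖x - y‖))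
    (hc : ∀ x ∈ U, ∀ v : Fin n → X, Continuous fun s => g s x v) :
    ContinuousOn (fun q : E × X × (Fin n → X) => g q.1 q.2.1 q.2.2)
      {q : E × X × (Fin n → X) | q.2.1 ∈ U} := by
  rintro ⟨s₀, x₀, v₀⟩ hq₀
  have hx₀ : x₀ ∈ U := hq₀
  obtain ⟨r, M, L, hr, hrU, hM, hL, hgb, hglip⟩ := hloc x₀ hx₀
  refine ContinuousAt.continuousWithinAt ?_
  rw [ContinuousAt, tendsto_iff_dist_tendsto_zero]
  set G : E × X × (Fin n → X) → ℝ := fun q =>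
    L * ‖q.2.1 - x₀‖ * ‖q.2.2‖ ^ n
    + M * n * max ‖q.2.2‖ ‖v₀‖ ^ (n - 1) * ‖q.2.2 - v₀‖
    + dist (g q.1 x₀ v₀) (g s₀ x₀ v₀) with hGdef
  have hGt : Tendsto G (𝓝 (s₀, x₀, v₀)) (𝓝 0) := by
    have hcx : Continuous fun q : E × X × (Fin n → X) => q.2.1 :=
      continuous_fst.comp continuous_snd
    have hcv : Continuous fun q : E × X × (Fin n → X) => q.2.2 :=
      continuous_snd.comp continuous_snd
    have h1 : Continuous fun q : E × X × (Fin n → X) => L * ‖q.2.1 - x₀‖ * ‖q.2.2‖ ^ n :=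
      ((continuous_const.mul ((hcx.sub continuous_const).norm)).mul (hcv.norm.pow n))
    have h2 : Continuous fun q : E × X × (Fin n → X) =>
        M * n * max ‖q.2.2‖ ‖v₀‖ ^ (n - 1) * ‖q.2.2 - v₀‖ :=
      ((continuous_const.mul ((hcv.norm.max continuous_const).pow (n - 1))).mul
        ((hcv.sub continuous_const).norm))
    have h3 : Continuous fun q : E × X × (Fin n → X) =>
        dist (g q.1 x₀ v₀) (g s₀ x₀ v₀) :=
      ((hc x₀ hx₀ v₀).comp continuous_fst).dist continuous_const
    have ht1 := h1.tendsto' (s₀, x₀, v₀) 0 (by simp)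
    have ht2 := h2.tendsto' (s₀, x₀, v₀) 0 (by simp)
    have ht3 := h3.tendsto' (s₀, x₀, v₀) 0 (by simp)
    have := (ht1.add ht2).add ht3
    simpa using this
  refine squeeze_zero' (Eventually.of_forall fun q => dist_nonneg) ?_ hGt
  have hev : ∀ᶠ q : E × X × (Fin n → X) in 𝓝 (s₀, x₀, v₀), q.2.1 ∈ ball x₀ r := by
    have hcx : Continuous fun q : E × X × (Fin n → X) => q.2.1 :=
      continuous_fst.comp continuous_snd
    exact hcx.continuousAt.preimage_mem_nhds (isOpen_ball.mem_nhds (mem_ball_self hr))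
  filter_upwards [hev] with q hq
  obtain ⟨s, x, v⟩ := q
  have hx : x ∈ ball x₀ r := hq
  have hx₀r : x₀ ∈ ball x₀ r := mem_ball_self hr
  have t1 : ‖g s x v - g s x₀ v‖ ≤ L * ‖x - x₀‖ * ‖v‖ ^ n := by
    have h1 : g s x v - g s x₀ v = (g s x - g s x₀) v := by
      rw [ContinuousMultilinearMap.sub_apply]
    rw [h1]
    have hprod : ∏ i, ‖v i‖ ≤ ‖v‖ ^ n := by
      calc ∏ i, ‖v i‖ ≤ ∏ _i : Fin n, ‖v‖ :=
            Finset.prod_le_prod (fun i _ => norm_nonneg _) (fun i _ => norm_le_pi_norm v i)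
        _ = ‖v‖ ^ n := by simp [Finset.prod_const]
    calc ‖(g s x - g s x₀) v‖ ≤ ‖g s x - g s x₀‖ * ∏ i, ‖v i‖ :=
          (g s x - g s x₀).le_opNorm v
      _ ≤ (L * ‖x - x₀‖) * ‖v‖ ^ n := by
          refine mul_le_mul (hglip s x hx x₀ hx₀r) hprod (by positivity) ?_
          positivity
      _ = L * ‖x - x₀‖ * ‖v‖ ^ n := by ring
  have t2 : ‖g s x₀ v - g s x₀ v₀‖ ≤ M * n * max ‖v‖ ‖v₀‖ ^ (n - 1) * ‖v - v₀‖ := by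
    have h1 := (g s x₀).norm_image_sub_le v v₀
    simp only [Fintype.card_fin] at h1
    refine h1.trans ?_
    gcongr
    exact hgb s x₀ hx₀r
  calc dist (g s x v) (g s₀ x₀ v₀)
      ≤ dist (g s x v) (g s x₀ v₀) + dist (g s x₀ v₀) (g s₀ x₀ v₀) := dist_triangle _ _ _
    _ ≤ (‖g s x v - g s x₀ v‖ + ‖g s x₀ v - g s x₀ v₀‖)
        + dist (g s x₀ v₀) (g s₀ x₀ v₀) := by
        refine add_le_add ?_ le_rfl
        rw [dist_eq_norm]
        calc ‖g s x v - g s x₀ v₀‖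
            = ‖(g s x v - g s x₀ v) + (g s x₀ v - g s x₀ v₀)‖ := by abel_nf
          _ ≤ ‖g s x v - g s x₀ v‖ + ‖g s x₀ v - g s x₀ v₀‖ := norm_add_le _ _
    _ ≤ G (s, x, v) := by
        rw [hGdef]
        exact add_le_add (add_le_add t1 t2) le_rfl

end JCAux

section Pointwise

variable {X Y E : Type*} [NormedAddCommGroup X] [NormedSpace ℂ X]
  [NormedAddCommGroup Y] [NormedSpace ℂ Y] [CompleteSpace Y] [TopologicalSpace E]

/-- Continuity in the parameter of the next derivative, from joint continuity at the
previous order, via the Cauchy estimate on a circle. -/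
lemma pointwise_param_continuity {U : Set X} (hU : IsOpen U) (f : E → X → Y) {p : ℕ}
    (hsm : ∀ (s : E) (n : ℕ), ∀ x ∈ U, DifferentiableAt ℂ (iteratedFDeriv ℂ n (f s)) x)
    (IH : ContinuousOn (fun q : E × X × (Fin p → X) =>
        (iteratedFDeriv ℂ p (f q.1) q.2.1) q.2.2) {q | q.2.1 ∈ U}) :
    ∀ x ∈ U, ∀ v : Fin (p + 1) → X,
      Continuous fun s => iteratedFDeriv ℂ (p + 1) (f s) x v := by
  intro x hx v
  set u := v 0 with hudef
  set w := Fin.tail v with hwdef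
  obtain ⟨r₀, hr₀, hr₀U⟩ := Metric.isOpen_iff.mp hU x hx
  set ρ' := r₀ / 2 with hρ'def
  have hρ'pos : 0 < ρ' := by positivity
  have hρ'U : closedBall x ρ' ⊆ U := by
    intro y hy
    refine hr₀U ?_
    rw [mem_closedBall] at hy
    rw [mem_ball]
    calc dist y x ≤ ρ' := hy
      _ < r₀ := by rw [hρ'def]; linarith
  set ρ := ρ' / (‖u‖ + 1) with hρdef
  have hρ : 0 < ρ := by positivity
  have hmem : ∀ t : ℂ, t ∈ closedBall (0:ℂ) ρ → x + t • u ∈ U := by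
    intro t ht
    rw [mem_closedBall, dist_zero_right] at ht
    refine hρ'U ?_
    rw [mem_closedBall, dist_eq_norm, add_sub_cancel_left, norm_smul]
    calc ‖t‖ * ‖u‖ ≤ ρ * ‖u‖ := mul_le_mul_of_nonneg_right ht (norm_nonneg u)
      _ ≤ ρ * (‖u‖ + 1) := by
          refine mul_le_mul_of_nonneg_left (by linarith) hρ.le
      _ = ρ' := by rw [hρdef]; field_simp
  set e : ContinuousMultilinearMap ℂ (fun _ : Fin p => X) Y →L[ℂ] Y :=
    ContinuousMultilinearMap.apply ℂ (fun _ : Fin p => X) Y w with hedef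
  have hkey : ∀ s : E, HasDerivAt (fun t : ℂ => iteratedFDeriv ℂ p (f s) (x + t • u) w)
      (iteratedFDeriv ℂ (p + 1) (f s) x v) 0 := by
    intro s
    have hdG : DifferentiableAt ℂ (iteratedFDeriv ℂ p (f s)) (x + (0:ℂ) • u) := by
      have h0 : x + (0:ℂ) • u = x := by simp
      rw [h0]; exact hsm s p x hx
    have h1 := hasDerivAt_line hdG
    have h2 := e.hasFDerivAt.comp_hasDerivAt 0 h1
    have h3 : (⇑e ∘ fun t : ℂ => iteratedFDeriv ℂ p (f s) (x + t • u))
        = fun t : ℂ => iteratedFDeriv ℂ p (f s) (x + t • u) w := rfl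
    rw [h3] at h2
    have h4 : e (fderiv ℂ (iteratedFDeriv ℂ p (f s)) (x + (0:ℂ) • u) u)
        = iteratedFDeriv ℂ (p + 1) (f s) x v := by
      have h0 : x + (0:ℂ) • u = x := by simp
      rw [h0, hedef, ContinuousMultilinearMap.apply_apply, iteratedFDeriv_succ_apply_left]
    rwa [h4] at h2
  have hφd : ∀ s : E, ∀ t ∈ closedBall (0:ℂ) ρ,
      DifferentiableAt ℂ (fun t' : ℂ => iteratedFDeriv ℂ p (f s) (x + t' • u) w) t := by
    intro s t ht
    have h1 := hasDerivAt_line (u := u) (t₀ := t) (hsm s p _ (hmem t ht))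
    have h2 := e.hasFDerivAt.comp_hasDerivAt t h1
    have h3 : (⇑e ∘ fun t' : ℂ => iteratedFDeriv ℂ p (f s) (x + t' • u))
        = fun t' : ℂ => iteratedFDeriv ℂ p (f s) (x + t' • u) w := rfl
    rw [h3] at h2
    exact h2.differentiableAt
  set K := closedBall (0:ℂ) ρ with hKdef
  haveI hKc : CompactSpace K := isCompact_iff_compactSpace.mp (isCompact_closedBall _ _)
  have hΨc : Continuous fun q : E × K =>
      iteratedFDeriv ℂ p (f q.1) (x + (q.2 : ℂ) • u) w := by
    have hmap : Continuous fun q : E × K =>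
        ((q.1, x + (q.2 : ℂ) • u, w) : E × X × (Fin p → X)) := by
      refine continuous_fst.prodMk (Continuous.prodMk ?_ continuous_const)
      exact continuous_const.add
        ((continuous_subtype_val.comp continuous_snd).smul continuous_const)
    exact IH.comp_continuous hmap fun q => hmem (q.2 : ℂ) q.2.2
  set Ψ : C(E × K, Y) := ⟨_, hΨc⟩ with hΨdef
  set Φ := Ψ.curry with hΦdef
  rw [continuous_iff_continuousAt]
  intro s₀
  rw [ContinuousAt, tendsto_iff_dist_tendsto_zero]
  refine squeeze_zero (g := fun s => dist (Φ s) (Φ s₀) / ρ) (fun s => dist_nonneg)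
    (fun s => ?_) ?_
  · -- dist bound by (dist (Φ s) (Φ s₀)) / ρ
    show dist (iteratedFDeriv ℂ (p + 1) (f s) x v) (iteratedFDeriv ℂ (p + 1) (f s₀) x v)
      ≤ dist (Φ s) (Φ s₀) / ρ
    have hsub : ∀ t ∈ closedBall (0:ℂ) ρ, DifferentiableAt ℂ
        (fun t' : ℂ => iteratedFDeriv ℂ p (f s) (x + t' • u) w
          - iteratedFDeriv ℂ p (f s₀) (x + t' • u) w) t :=
      fun t ht => (hφd s t ht).sub (hφd s₀ t ht)
    have hbb : ∀ t ∈ closedBall (0:ℂ) ρ,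
        ‖iteratedFDeriv ℂ p (f s) (x + t • u) w
          - iteratedFDeriv ℂ p (f s₀) (x + t • u) w‖ ≤ dist (Φ s) (Φ s₀) := by
      intro t ht
      have h1 := ContinuousMap.dist_apply_le_dist (f := Φ s) (g := Φ s₀) (⟨t, ht⟩ : K)
      have h2 : Φ s ⟨t, ht⟩ = iteratedFDeriv ℂ p (f s) (x + t • u) w := rfl
      have h3 : Φ s₀ ⟨t, ht⟩ = iteratedFDeriv ℂ p (f s₀) (x + t • u) w := rfl
      rw [h2, h3, dist_eq_norm] at h1
      exact h1
    have hnd := norm_deriv_le_of_closedBall hρ hsub hbb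
    have hdsub : deriv (fun t' : ℂ => iteratedFDeriv ℂ p (f s) (x + t' • u) w
          - iteratedFDeriv ℂ p (f s₀) (x + t' • u) w) 0
        = iteratedFDeriv ℂ (p + 1) (f s) x v - iteratedFDeriv ℂ (p + 1) (f s₀) x v := by
      have := ((hkey s).sub (hkey s₀)).deriv
      exact this
    rw [hdsub] at hnd
    rw [dist_eq_norm]
    exact hnd
  · have hcont : Continuous fun s => dist (Φ s) (Φ s₀) :=
      (Φ.continuous).dist continuous_const
    have := (hcont.tendsto' s₀ 0 (by simp)).div_const ρ
    simpa using this

end Pointwise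


/-- **Proposition 2.1**: joint continuity of the Fréchet derivatives of a
uniformly bounded family of analytic maps depending continuously on a
compact parameter. -/
theorem joint_continuity_of_frechet_derivatives
    {X Y E : Type*}
    [NormedAddCommGroup X] [NormedSpace ℂ X] [CompleteSpace X]
    [NormedAddCommGroup Y] [NormedSpace ℂ Y] [CompleteSpace Y]
    [TopologicalSpace E] [CompactSpace E]
    {U : Set X} (hU : IsOpen U)
    (f : E → X → Y)
    (hbdd : ∃ C : ℝ, ∀ s x, ‖f s x‖ ≤ C)
    (hanalytic : ∀ s, ∀ x ∈ U, DifferentiableAt ℂ (f s) x)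
    (hcont : ∀ x, Continuous fun s => f s x)
    (p : ℕ) :
    ContinuousOn
      (fun q : E × X × (Fin p → X) => (iteratedFDeriv ℂ p (f q.1) q.2.1) q.2.2)
      {q : E × X × (Fin p → X) | q.2.1 ∈ U} := by
  obtain ⟨C, hC⟩ := hbdd
  have hsm : ∀ (s : E) (n : ℕ), ∀ x ∈ U, DifferentiableAt ℂ (iteratedFDeriv ℂ n (f s)) x :=
    fun s n => differentiableAt_iteratedFDeriv hU (hanalytic s) n
  have hBnd : ∀ n : ℕ, ∀ x₀ ∈ U, ∃ r M' : ℝ, 0 < r ∧ ball x₀ r ⊆ U ∧ 0 ≤ M' ∧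
      ∀ s, ∀ x ∈ ball x₀ r, ‖iteratedFDeriv ℂ n (f s) x‖ ≤ M' := by
    intro n
    induction n with
    | zero =>
      intro x₀ hx₀
      obtain ⟨r, hr, hrU⟩ := Metric.isOpen_iff.mp hU x₀ hx₀
      refine ⟨r, max C 0, hr, hrU, le_max_right _ _, ?_⟩
      intro s x _
      rw [norm_iteratedFDeriv_zero]
      exact (hC s x).trans (le_max_left _ _)
    | succ n ih =>
      intro x₀ hx₀
      obtain ⟨r, M', hr, hrU, hM', hbd⟩ := ih x₀ hx₀
      refine ⟨r / 2, 4 * M' / r, by positivity,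
        (ball_subset_ball (by linarith)).trans hrU, by positivity, ?_⟩
      intro s x hx
      rw [norm_iteratedFDeriv_succ_eq]
      exact norm_fderiv_le_of_ball (fun y hy => hsm s n y (hrU hy))
        (fun y hy => hbd s y hy) hx
  induction p with
  | zero =>
    refine joint_continuity_aux (fun s x => iteratedFDeriv ℂ 0 (f s) x) ?_ ?_
    · intro x₀ hx₀
      obtain ⟨r, M', hr, hrU, hM', hbd⟩ := hBnd 0 x₀ hx₀
      refine ⟨r / 8, M', 6 * M' / r, by positivity,
        (ball_subset_ball (by linarith)).trans hrU, hM', by positivity, ?_, ?_⟩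
      · intro s x hx
        exact hbd s x (ball_subset_ball (by linarith) hx)
      · intro s x hx y hy
        exact norm_sub_le_of_ball (fun z hz => hsm s 0 z (hrU hz))
          (fun z hz => hbd s z hz) hx hy
    · intro x hx v
      simp only [iteratedFDeriv_zero_apply]
      exact hcont x
  | succ p IH =>
    refine joint_continuity_aux (fun s x => iteratedFDeriv ℂ (p + 1) (f s) x) ?_ ?_
    · intro x₀ hx₀
      obtain ⟨r, M', hr, hrU, hM', hbd⟩ := hBnd (p + 1) x₀ hx₀
      refine ⟨r / 8, M', 6 * M' / r, by positivity,
        (ball_subset_ball (by linarith)).trans hrU, hM', by positivity, ?_, ?_⟩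
      · intro s x hx
        exact hbd s x (ball_subset_ball (by linarith) hx)
      · intro s x hx y hy
        exact norm_sub_le_of_ball (fun z hz => hsm s (p + 1) z (hrU hz))
          (fun z hz => hbd s z hz) hx hy
    · exact pointwise_param_continuity hU f hsm IH
end
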